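/- arXiv:2211.08180 — 10 statements merged into one kernel-verified Lean document; each statement's English description precedes it below -/
import Mathlib

section
/- Let q be a prime power, m, e positive integers with e ≥ 1, and let C' ⊆ F_q^{m×m} be an F_q-linear subspace of m×m matrices over F_q that contains at least one invertible matrix. Let C ⊆ F_q^{em×em} be the F_q-linear code consisting of all block-diagonal matrices diag(A, …, A) with e identical diagonal blocks A ∈ C'. Then the left idealiser of C equals { diag(B, …, B) : B ∈ L(C') }, where L(C') is the left idealiser of C'. -/
lemma bd_inj {Fq : Type} [Field Fq] {m e : ℕ} (he : 1 ≤ e)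
    {A B : Matrix (Fin m) (Fin m) Fq}
    (h : Matrix.blockDiagonal (fun _ : Fin e => A) =
         Matrix.blockDiagonal (fun _ : Fin e => B)) : A = B := by
  ext i j
  have := congrFun (congrFun h (i, ⟨0, he⟩)) (j, ⟨0, he⟩)
  simpa [Matrix.blockDiagonal_apply_eq] using this

/-- The left idealiser of the block-diagonal repetition code
`C = {diag(A,…,A) : A ∈ C'}` (with `e` identical blocks) equals
`{diag(B,…,B) : B ∈ L(C')}`, provided `C'` contains an invertible matrix. -/
theorem stmt_0 (Fq : Type) [Field Fq] [Fintype Fq] (m e : ℕ) (hm : 0 < m) (he : 1 ≤ e)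
    (C' : Submodule Fq (Matrix (Fin m) (Fin m) Fq))
    (hinv : ∃ A ∈ C', IsUnit A)
    (C : Set (Matrix (Fin m × Fin e) (Fin m × Fin e) Fq))
    (hC : C = {X | ∃ A ∈ C', X = Matrix.blockDiagonal (fun _ : Fin e => A)}) :
    {X : Matrix (Fin m × Fin e) (Fin m × Fin e) Fq | ∀ Y ∈ C, X * Y ∈ C} =
      {X | ∃ B : Matrix (Fin m) (Fin m) Fq,
        (∀ A ∈ C', B * A ∈ C') ∧ X = Matrix.blockDiagonal (fun _ : Fin e => B)} := by
  subst hC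
  ext X
  simp only [Set.mem_setOf_eq]
  constructor
  · intro h
    obtain ⟨A, hA, hAu⟩ := hinv
    obtain ⟨A', hA', hX⟩ := h _ ⟨A, hA, rfl⟩
    obtain ⟨Ai, hAi⟩ := hAu.exists_right_inv
    have hXeq : X = Matrix.blockDiagonal (fun _ : Fin e => A' * Ai) := by
      calc X = X * 1 := (mul_one X).symm
        _ = X * (Matrix.blockDiagonal (fun _ : Fin e => A) *
              Matrix.blockDiagonal (fun _ : Fin e => Ai)) := by
            have h1 : Matrix.blockDiagonal (fun _ : Fin e => A) *
                Matrix.blockDiagonal (fun _ : Fin e => Ai) = 1 := by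
              rw [← Matrix.blockDiagonal_mul]
              simp only [hAi]
              exact Matrix.blockDiagonal_one
            rw [h1]
        _ = Matrix.blockDiagonal (fun _ : Fin e => A') *
              Matrix.blockDiagonal (fun _ : Fin e => Ai) := by
            rw [← mul_assoc, ← hX]
        _ = Matrix.blockDiagonal (fun _ : Fin e => A' * Ai) := by
            rw [Matrix.blockDiagonal_mul]
    refine ⟨A' * Ai, ?_, hXeq⟩
    intro A₁ hA₁
    obtain ⟨A₂, hA₂, hX₂⟩ := h _ ⟨A₁, hA₁, rfl⟩
    have : Matrix.blockDiagonal (fun _ : Fin e => (A' * Ai) * A₁) =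
        Matrix.blockDiagonal (fun _ : Fin e => A₂) := by
      rw [Matrix.blockDiagonal_mul, ← hXeq]
      exact hX₂
    rw [bd_inj he this]
    exact hA₂
  · rintro ⟨B, hB, rfl⟩
    rintro Y ⟨A, hA, rfl⟩
    exact ⟨B * A, hB A hA, (Matrix.blockDiagonal_mul _ _).symm⟩
end

section
/- Let q be a prime power, m a positive integer and e ≥ 2. Let C' ⊆ F_q^{m×m} be an F_q-linear subspace containing an invertible matrix, and let C = { diag(A, …, A) : A ∈ C' } ⊆ F_q^{em×em} be the corresponding block-diagonal repetition code. Then the left idealiser L(C) contains no subring isomorphic (as a ring) to the finite field with q^{em} elements; in particular, C is not F_{q^{em}}-linear. -/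
/-- For `e ≥ 2`, the left idealiser of the block-diagonal repetition code
`C = {diag(A,…,A) : A ∈ C'}` contains no subring isomorphic (as a ring) to the finite
field with `q^(em)` elements, i.e. no subring that is a field of cardinality `q^(em)`;
in particular `C` is not `F_{q^{em}}`-linear. -/
theorem stmt_1 (Fq : Type) [Field Fq] [Fintype Fq] (m e : ℕ) (hm : 0 < m) (he : 2 ≤ e)
    (C' : Submodule Fq (Matrix (Fin m) (Fin m) Fq))
    (hinv : ∃ A ∈ C', IsUnit A)
    (C : Set (Matrix (Fin m × Fin e) (Fin m × Fin e) Fq))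
    (hC : C = {X | ∃ A ∈ C', X = Matrix.blockDiagonal (fun _ : Fin e => A)}) :
    ¬ ∃ S : Subring (Matrix (Fin m × Fin e) (Fin m × Fin e) Fq),
        (S : Set (Matrix (Fin m × Fin e) (Fin m × Fin e) Fq)) ⊆
          {X | ∀ Y ∈ C, X * Y ∈ C} ∧
        IsField S ∧ Nat.card S = Fintype.card Fq ^ (e * m) := by
  rintro ⟨S, hSsub, hfield, hcard⟩
  obtain ⟨A, hA, hAu⟩ := hinv
  obtain ⟨u, rfl⟩ := hAu
  set e0 : Fin e := ⟨0, by omega⟩ with he0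
  set i0 : Fin m := ⟨0, hm⟩ with hi0
  -- every element of S is a block diagonal repetition matrix
  have hbd : ∀ s ∈ S, ∃ D : Matrix (Fin m) (Fin m) Fq,
      s = Matrix.blockDiagonal (fun _ : Fin e => D) := by
    intro s hs
    have h1 : Matrix.blockDiagonal (fun _ : Fin e => (u : Matrix (Fin m) (Fin m) Fq)) ∈ C := by
      rw [hC]; exact ⟨u, hA, rfl⟩
    have h2 := hSsub hs _ h1
    rw [hC] at h2
    obtain ⟨B, _hB, hBeq⟩ := h2
    refine ⟨B * (↑u⁻¹ : Matrix (Fin m) (Fin m) Fq), ?_⟩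
    have h3 : Matrix.blockDiagonal (fun _ : Fin e => (u : Matrix (Fin m) (Fin m) Fq)) *
        Matrix.blockDiagonal (fun _ : Fin e => (↑u⁻¹ : Matrix (Fin m) (Fin m) Fq)) = 1 := by
      rw [← Matrix.blockDiagonal_mul]
      simp only [Units.mul_inv]; exact Matrix.blockDiagonal_one
    calc s = s * (Matrix.blockDiagonal (fun _ : Fin e => (u : Matrix (Fin m) (Fin m) Fq)) *
          Matrix.blockDiagonal (fun _ : Fin e => (↑u⁻¹ : Matrix (Fin m) (Fin m) Fq))) := by
          rw [h3, mul_one]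
      _ = (s * Matrix.blockDiagonal (fun _ : Fin e => (u : Matrix (Fin m) (Fin m) Fq))) *
          Matrix.blockDiagonal (fun _ : Fin e => (↑u⁻¹ : Matrix (Fin m) (Fin m) Fq)) := by
          rw [mul_assoc]
      _ = Matrix.blockDiagonal (fun _ : Fin e => B) *
          Matrix.blockDiagonal (fun _ : Fin e => (↑u⁻¹ : Matrix (Fin m) (Fin m) Fq)) := by
          rw [← hBeq]
      _ = Matrix.blockDiagonal (fun _ : Fin e => B * (↑u⁻¹ : Matrix (Fin m) (Fin m) Fq)) := by
          rw [← Matrix.blockDiagonal_mul]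
  -- an injection S ↪ (Fin m → Fq)
  have hinj : Function.Injective
      (fun s : S => (fun i : Fin m => (s : Matrix (Fin m × Fin e) (Fin m × Fin e) Fq)
        (i, e0) (i0, e0))) := by
    intro s₁ s₂ h
    have hs : ((s₁ - s₂ : S) : Matrix (Fin m × Fin e) (Fin m × Fin e) Fq) ∈ S :=
      (s₁ - s₂).2
    obtain ⟨D, hD⟩ := hbd _ hs
    -- column (i0, e0) of s₁ - s₂ is zero
    have hcol : ∀ x, ((s₁ - s₂ : S) : Matrix (Fin m × Fin e) (Fin m × Fin e) Fq)
        x (i0, e0) = 0 := by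
      rintro ⟨i, k⟩
      rw [hD, Matrix.blockDiagonal_apply]
      by_cases hk : k = e0
      · subst hk
        simp only [if_pos rfl]
        have hDi : D i i0 = ((s₁ - s₂ : S) : Matrix (Fin m × Fin e) (Fin m × Fin e) Fq)
            (i, e0) (i0, e0) := by rw [hD]; simp
        rw [hDi]
        have := congrFun h i
        simp only at this
        push_cast
        simp only [Matrix.sub_apply]
        have h1 : (s₁ : Matrix (Fin m × Fin e) (Fin m × Fin e) Fq) (i, e0) (i0, e0)
            = (s₂ : Matrix (Fin m × Fin e) (Fin m × Fin e) Fq) (i, e0) (i0, e0) := this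
        push_cast at hDi ⊢
        rw [sub_eq_zero]
        exact h1
      · exact if_neg hk
    -- if s₁ ≠ s₂ then s₁ - s₂ is invertible in S, contradiction
    by_contra hne
    have hsne : (s₁ - s₂ : S) ≠ 0 := sub_ne_zero.mpr hne
    obtain ⟨t, ht⟩ := hfield.mul_inv_cancel hsne
    have ht' : (t * (s₁ - s₂) : S) = 1 := by rw [hfield.mul_comm]; exact ht
    have := congrArg (fun M : S => (M : Matrix (Fin m × Fin e) (Fin m × Fin e) Fq)
        (i0, e0) (i0, e0)) ht'
    simp only [Subring.coe_mul, Subring.coe_one, Matrix.mul_apply] at this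
    rw [Matrix.one_apply_eq] at this
    have hz : ∀ y, (t : Matrix (Fin m × Fin e) (Fin m × Fin e) Fq) (i0, e0) y *
        ((s₁ - s₂ : S) : Matrix (Fin m × Fin e) (Fin m × Fin e) Fq) y (i0, e0) = 0 := by
      intro y; rw [hcol y, mul_zero]
    rw [Finset.sum_eq_zero (fun y _ => hz y)] at this
    exact one_ne_zero this.symm
  -- cardinality contradiction
  have hfin : Finite S := by infer_instance
  have hle : Nat.card S ≤ Nat.card (Fin m → Fq) := Nat.card_le_card_of_injective _ hinj
  rw [hcard] at hle
  have hcardfn : Nat.card (Fin m → Fq) = Fintype.card Fq ^ m := by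
    simp [Nat.card_eq_fintype_card]
  rw [hcardfn] at hle
  have hq : 1 < Fintype.card Fq := Fintype.one_lt_card
  have hlt : Fintype.card Fq ^ m < Fintype.card Fq ^ (e * m) :=
    Nat.pow_lt_pow_right hq (by nlinarith)
  omega
end

section
/- Let q be a prime power, m, n, k positive integers, F_{q^m} the degree-m extension of F_q, and fix an ordered F_q-basis Γ̃ of F_{q^m} with associated column-expansion map Γ: F_{q^m}^n → F_q^{m×n}. Let C ⊆ F_q^{m×n} be an F_q-subspace of F_q-dimension mk whose left idealiser contains a subring G with (G, +, ·) isomorphic to the field F_{q^m}. Then there exists an invertible matrix H ∈ GL(m, q) such that Γ^{-1}(H^{-1}C) is an F_{q^m}-subspace of F_{q^m}^n (equivalently, H^{-1}C corresponds under Γ to an [n, k] F_{q^m}-linear code). -/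
open Polynomial

set_option maxHeartbeats 2000000 in
/-- If `C ⊆ F_q^{m×n}` is an `F_q`-subspace of dimension `mk` whose left
idealiser contains a subring `G` ring-isomorphic to the field `F_{q^m}`, then there is an
invertible matrix `H ∈ GL(m,q)` such that `Γ⁻¹(H⁻¹ C) = {x : F_{q^m}^n | H * Γ x ∈ C}`
is an `F_{q^m}`-subspace of `F_{q^m}^n`. -/
theorem stmt_3 (Fq Fqm : Type) [Field Fq] [Fintype Fq] [Field Fqm] [Algebra Fq Fqm]
    (m n k : ℕ) (hm : 0 < m) (hn : 0 < n) (hk : 0 < k)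
    (hdeg : Module.finrank Fq Fqm = m)
    (b : Module.Basis (Fin m) Fq Fqm)
    (Γ : (Fin n → Fqm) → Matrix (Fin m) (Fin n) Fq)
    (hΓ : ∀ x j i, Γ x j i = b.repr (x i) j)
    (C : Submodule Fq (Matrix (Fin m) (Fin n) Fq))
    (hdim : Module.finrank Fq C = m * k)
    (hG : ∃ G : Subring (Matrix (Fin m) (Fin m) Fq),
      (G : Set (Matrix (Fin m) (Fin m) Fq)) ⊆ {X | ∀ A ∈ C, X * A ∈ C} ∧
      Nonempty (G ≃+* Fqm)) :
    ∃ H : Matrix (Fin m) (Fin m) Fq, IsUnit H ∧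
      ∃ S : Submodule Fqm (Fin n → Fqm),
        (S : Set (Fin n → Fqm)) = {x | H * Γ x ∈ C} := by
  classical
  obtain ⟨G, hGstab, ⟨ψ⟩⟩ := hG
  haveI : Fintype Fqm := Fintype.ofEquiv (Fin m → Fq) b.equivFun.toEquiv.symm
  haveI : Fintype ↥G := Fintype.ofEquiv Fqm ψ.toEquiv.symm
  have hcardFqm : Fintype.card Fqm = Fintype.card Fq ^ m := by
    rw [Fintype.card_congr b.equivFun.toEquiv]; simp
  have hcardG : Fintype.card ↥G = Fintype.card Fqm := Fintype.card_congr ψ.toEquiv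
  -- commutativity of G
  have hcomm : ∀ g h : ↥G, g * h = h * g := fun g h =>
    ψ.injective (by rw [map_mul, map_mul, mul_comm])
  -- nonzero elements of G are invertible matrices
  have hinv : ∀ g : ↥G, g ≠ 0 → ∃ B : Matrix (Fin m) (Fin m) Fq,
      (g : Matrix (Fin m) (Fin m) Fq) * B = 1 ∧ B * (g : Matrix (Fin m) (Fin m) Fq) = 1 := by
    intro g hg
    have h1 : ψ g ≠ 0 := fun h => hg (ψ.injective (by simpa using h))
    set g' : ↥G := ψ.symm (ψ g)⁻¹ with hg'
    have hmul : g * g' = 1 := ψ.injective (by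
      rw [map_mul, map_one, hg', RingEquiv.apply_symm_apply, mul_inv_cancel₀ h1])
    have hmul' : g' * g = 1 := by rw [hcomm, hmul]
    exact ⟨(g' : Matrix (Fin m) (Fin m) Fq),
      by exact_mod_cast congrArg Subtype.val hmul,
      by exact_mod_cast congrArg Subtype.val hmul'⟩
  have hunit : ∀ g : ↥G, g ≠ 0 → IsUnit (g : Matrix (Fin m) (Fin m) Fq) := by
    intro g hg
    obtain ⟨B, h1, h2⟩ := hinv g hg
    exact ⟨⟨_, B, h1, h2⟩, rfl⟩
  have hmvinj : ∀ g : ↥G, g ≠ 0 →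
      Function.Injective ((g : Matrix (Fin m) (Fin m) Fq).mulVec) := by
    intro g hg v w hvw
    obtain ⟨B, h1, h2⟩ := hinv g hg
    calc v = (B * (g : Matrix (Fin m) (Fin m) Fq)).mulVec v := by
            rw [h2, Matrix.one_mulVec]
      _ = B.mulVec ((g : Matrix (Fin m) (Fin m) Fq).mulVec v) := by
            rw [← Matrix.mulVec_mulVec]
      _ = B.mulVec ((g : Matrix (Fin m) (Fin m) Fq).mulVec w) := by rw [hvw]
      _ = w := by rw [Matrix.mulVec_mulVec, h2, Matrix.one_mulVec]
  -- the orbit map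
  set v₀ : Fin m → Fq := fun _ => 1 with hv₀def
  have hv₀ : v₀ ≠ 0 := by
    intro h
    have := congrFun h ⟨0, hm⟩
    simp [hv₀def] at this
  set f : ↥G → (Fin m → Fq) := fun g => (g : Matrix (Fin m) (Fin m) Fq).mulVec v₀ with hfdef
  have hfinj : Function.Injective f := by
    intro g g' hgg'
    by_contra hne
    have hsub : g - g' ≠ 0 := sub_ne_zero.mpr hne
    have hgg'' : ((g : Matrix (Fin m) (Fin m) Fq)).mulVec v₀ =
        ((g' : Matrix (Fin m) (Fin m) Fq)).mulVec v₀ := hgg'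
    have : ((g - g' : ↥G) : Matrix (Fin m) (Fin m) Fq).mulVec v₀ =
        ((g - g' : ↥G) : Matrix (Fin m) (Fin m) Fq).mulVec 0 := by
      push_cast
      rw [Matrix.sub_mulVec, Matrix.mulVec_zero, hgg'', sub_self]
    exact hv₀ (hmvinj _ hsub this)
  have hfbij : Function.Bijective f := by
    rw [Fintype.bijective_iff_injective_and_card]
    exact ⟨hfinj, by rw [hcardG, hcardFqm]; simp⟩
  -- scalar matrices lie in G
  have hsc : ∀ c : Fq, c • (1 : Matrix (Fin m) (Fin m) Fq) ∈ G := by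
    intro c
    obtain ⟨gc, hgc⟩ := hfbij.2 (c • v₀)
    have : c • (1 : Matrix (Fin m) (Fin m) Fq) = (gc : Matrix (Fin m) (Fin m) Fq) := by
      apply Matrix.toLin'.injective
      apply LinearMap.ext
      intro v
      obtain ⟨g, hg0⟩ := hfbij.2 v
      have hg : ((g : Matrix (Fin m) (Fin m) Fq)).mulVec v₀ = v := hg0
      have hgc' : ((gc : Matrix (Fin m) (Fin m) Fq)).mulVec v₀ = c • v₀ := hgc
      simp only [Matrix.toLin'_apply]
      calc (c • (1 : Matrix (Fin m) (Fin m) Fq)).mulVec v = c • v := by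
              rw [Matrix.smul_mulVec, Matrix.one_mulVec]
        _ = c • ((g : Matrix (Fin m) (Fin m) Fq).mulVec v₀) := by rw [← hg]
        _ = (g : Matrix (Fin m) (Fin m) Fq).mulVec (c • v₀) := by
              rw [Matrix.mulVec_smul]
        _ = (g : Matrix (Fin m) (Fin m) Fq).mulVec
              ((gc : Matrix (Fin m) (Fin m) Fq).mulVec v₀) := by rw [hgc']
        _ = ((g * gc : ↥G) : Matrix (Fin m) (Fin m) Fq).mulVec v₀ := by
              push_cast; rw [Matrix.mulVec_mulVec]
        _ = ((gc * g : ↥G) : Matrix (Fin m) (Fin m) Fq).mulVec v₀ := by rw [hcomm]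
        _ = (gc : Matrix (Fin m) (Fin m) Fq).mulVec v := by
              push_cast; rw [← Matrix.mulVec_mulVec, hg]
    rw [this]; exact gc.2
  -- Field structure on G
  letI : Field ↥G := (ψ.toMulEquiv.isField (Field.toIsField Fqm)).toField
  -- Algebra structure
  let ι : Fq →+* ↥G :=
    { toFun := fun c => ⟨c • (1 : Matrix (Fin m) (Fin m) Fq), hsc c⟩
      map_one' := by ext1; simp
      map_mul' := by
        intro c d
        ext1
        simp [Matrix.smul_mul, smul_smul, mul_comm]
      map_zero' := by ext1; simp
      map_add' := by intro c d; ext1; simp [add_smul] }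
  letI : Algebra Fq ↥G := ι.toAlgebra
  have hsmulG : ∀ (c : Fq) (g : ↥G),
      ((c • g : ↥G) : Matrix (Fin m) (Fin m) Fq) = c • (g : Matrix (Fin m) (Fin m) Fq) := by
    intro c g
    have : (c • g : ↥G) = ι c * g := rfl
    rw [this]
    show (c • (1 : Matrix (Fin m) (Fin m) Fq)) * (g : Matrix (Fin m) (Fin m) Fq) = _
    rw [Matrix.smul_mul, Matrix.one_mul]
  -- algebra isomorphism with Fqm
  haveI : IsSplittingField Fq Fqm ((X : Fq[X]) ^ Fintype.card ↥G - X) := by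
    rw [hcardG]; exact FiniteField.isSplittingField_sub Fqm Fq
  let θ : ↥G ≃ₐ[Fq] Fqm :=
    (IsSplittingField.algEquiv ↥G ((X : Fq[X]) ^ Fintype.card ↥G - X)).trans
      (IsSplittingField.algEquiv Fqm ((X : Fq[X]) ^ Fintype.card ↥G - X)).symm
  let η : Fqm ≃ₐ[Fq] ↥G := θ.symm
  -- the linear map
  let L : (Fin m → Fq) →ₗ[Fq] (Fin m → Fq) :=
    { toFun := fun w => ((η (b.equivFun.symm w) : ↥G) : Matrix (Fin m) (Fin m) Fq).mulVec v₀
      map_add' := by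
        intro w₁ w₂
        show ((η (b.equivFun.symm (w₁ + w₂)) : ↥G) : Matrix (Fin m) (Fin m) Fq).mulVec v₀ =
          ((η (b.equivFun.symm w₁) : ↥G) : Matrix (Fin m) (Fin m) Fq).mulVec v₀ +
          ((η (b.equivFun.symm w₂) : ↥G) : Matrix (Fin m) (Fin m) Fq).mulVec v₀
        rw [map_add, map_add, Subring.coe_add, Matrix.add_mulVec]
      map_smul' := by
        intro c w
        show ((η (b.equivFun.symm (c • w)) : ↥G) : Matrix (Fin m) (Fin m) Fq).mulVec v₀ =
          c • ((η (b.equivFun.symm w) : ↥G) : Matrix (Fin m) (Fin m) Fq).mulVec v₀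
        rw [map_smul, map_smul, hsmulG, Matrix.smul_mulVec] }
  have hL : ∀ α : Fqm,
      L (b.equivFun α) = ((η α : ↥G) : Matrix (Fin m) (Fin m) Fq).mulVec v₀ := by
    intro α
    show ((η (b.equivFun.symm (b.equivFun α)) : ↥G) : Matrix (Fin m) (Fin m) Fq).mulVec v₀ = _
    rw [b.equivFun.symm_apply_apply]
  have hLinj : Function.Injective L := by
    intro w₁ w₂ hw
    have h0 : η (b.equivFun.symm w₁) = η (b.equivFun.symm w₂) := by
      by_contra hne
      have hsub : η (b.equivFun.symm w₁) - η (b.equivFun.symm w₂) ≠ 0 := sub_ne_zero.mpr hne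
      have hweq : ((η (b.equivFun.symm w₁) - η (b.equivFun.symm w₂) : ↥G) :
          Matrix (Fin m) (Fin m) Fq).mulVec v₀ =
          ((η (b.equivFun.symm w₁) - η (b.equivFun.symm w₂) : ↥G) :
          Matrix (Fin m) (Fin m) Fq).mulVec 0 := by
        have hw' : ((η (b.equivFun.symm w₁) : ↥G) : Matrix (Fin m) (Fin m) Fq).mulVec v₀ =
            ((η (b.equivFun.symm w₂) : ↥G) : Matrix (Fin m) (Fin m) Fq).mulVec v₀ := hw
        show ((η (b.equivFun.symm w₁) : ↥G) - (η (b.equivFun.symm w₂) : ↥G) :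
            Matrix (Fin m) (Fin m) Fq).mulVec v₀ = _
        rw [Matrix.sub_mulVec, hw', sub_self, Matrix.mulVec_zero]
      exact hv₀ (hmvinj _ hsub hweq)
    have := b.equivFun.symm.injective (η.injective h0)
    exact this
  have hLbij : Function.Bijective L := Finite.injective_iff_bijective.mp hLinj
  let E : (Fin m → Fq) ≃ₗ[Fq] (Fin m → Fq) := LinearEquiv.ofBijective L hLbij
  set H : Matrix (Fin m) (Fin m) Fq := LinearMap.toMatrix' (L : (Fin m → Fq) →ₗ[Fq] (Fin m → Fq))
    with hHdef
  have hHunit : IsUnit H := by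
    refine ⟨⟨H, LinearMap.toMatrix' (E.symm : (Fin m → Fq) →ₗ[Fq] (Fin m → Fq)), ?_, ?_⟩, rfl⟩
    · rw [hHdef, ← LinearMap.toMatrix'_comp, ← LinearMap.toMatrix'_id]
      congr 1
      apply LinearMap.ext
      intro x
      show L (E.symm x) = x
      have : E (E.symm x) = x := E.apply_symm_apply x
      exact this
    · rw [hHdef, ← LinearMap.toMatrix'_comp, ← LinearMap.toMatrix'_id]
      congr 1
      apply LinearMap.ext
      intro x
      show E.symm (L x) = x
      have : E.symm (E x) = x := E.symm_apply_apply x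
      exact this
  have hHmul : ∀ w, H.mulVec w = L w := by
    intro w
    rw [hHdef, ← Matrix.toLin'_apply, Matrix.toLin'_toMatrix']
  have hkey : ∀ α y : Fqm, H.mulVec (b.equivFun (α * y)) =
      ((η α : ↥G) : Matrix (Fin m) (Fin m) Fq).mulVec (H.mulVec (b.equivFun y)) := by
    intro α y
    rw [hHmul, hHmul, hL, hL, map_mul, Subring.coe_mul, ← Matrix.mulVec_mulVec]
  -- column formulas
  have hcol : ∀ (A : Matrix (Fin m) (Fin m) Fq) (x : Fin n → Fqm) (r : Fin m) (c : Fin n),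
      (A * Γ x) r c = A.mulVec (b.equivFun (x c)) r := by
    intro A x r c
    simp [Matrix.mul_apply, Matrix.mulVec, dotProduct, hΓ, Module.Basis.equivFun_apply]
  have hcol2 : ∀ (A : Matrix (Fin m) (Fin m) Fq) (M : Matrix (Fin m) (Fin n) Fq)
      (r : Fin m) (c : Fin n), (A * M) r c = A.mulVec (fun i => M i c) r := by
    intro A M r c
    simp [Matrix.mul_apply, Matrix.mulVec, dotProduct]
  have hkey2 : ∀ (α : Fqm) (x : Fin n → Fqm),
      H * Γ (α • x) = ((η α : ↥G) : Matrix (Fin m) (Fin m) Fq) * (H * Γ x) := by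
    intro α x
    ext r c
    rw [hcol H (α • x) r c, hcol2]
    have h1 : (α • x) c = α * x c := rfl
    rw [h1, hkey]
    congr 1
    funext i
    rw [hcol H x i c]
  have hΓadd : ∀ x y : Fin n → Fqm, Γ (x + y) = Γ x + Γ y := by
    intro x y
    ext j i
    simp [hΓ, Pi.add_apply]
  have hΓzero : Γ 0 = 0 := by
    ext j i
    simp [hΓ]
  refine ⟨H, hHunit, ⟨{ carrier := (setOf fun x => H * Γ x ∈ C), add_mem' := ?_, zero_mem' := ?_, smul_mem' := ?_ }, rfl⟩⟩
  · intro x y hx hy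
    show H * Γ (x + y) ∈ C
    rw [hΓadd, Matrix.mul_add]
    exact C.add_mem hx hy
  · show H * Γ 0 ∈ C
    rw [hΓzero, Matrix.mul_zero]
    exact C.zero_mem
  · intro α x hx
    show H * Γ (α • x) ∈ C
    rw [hkey2]
    exact hGstab (η α).2 _ hx
end

section
/- Let q be a prime power, m, r, n positive integers with n < mr, let V be an F_{q^m}-vector space of dimension r, and let U be an F_q-subspace of V with dim_{F_q}(U) = n. Then for every positive integer l with lm ≤ rm − n, there exists an F_{q^m}-subspace S of V with dim_{F_{q^m}}(S) = l and S ∩ U = {0}. -/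
open Module Submodule

/-- Counting lemma: if `T` is an `F_q`-subspace of `V` with
`dim T + m ≤ dim V`, there is `v` whose `F_{q^m}`-line avoids `T`. -/
lemma stmt_10_avoid {Fq Fqm V : Type} [Field Fq] [Fintype Fq] [Field Fqm] [Algebra Fq Fqm]
    [AddCommGroup V] [Module Fqm V] [Module Fq V] [IsScalarTower Fq Fqm V]
    [FiniteDimensional Fq Fqm] [FiniteDimensional Fq V]
    (T : Submodule Fq V)
    (h : Module.finrank Fq T + Module.finrank Fq Fqm ≤ Module.finrank Fq V) :
    ∃ v : V, ∀ c : Fqm, c ≠ 0 → c • v ∉ T := by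
  by_contra hcon
  push_neg at hcon
  choose c hc0 hcT using hcon
  have hinj : Function.Injective
      (fun v : V => ((⟨c v, hc0 v⟩ : {x : Fqm // x ≠ 0}), (⟨c v • v, hcT v⟩ : T))) := by
    intro v w hvw
    simp only [Prod.mk.injEq, Subtype.mk.injEq] at hvw
    obtain ⟨h1, h2⟩ := hvw
    rw [h1] at h2
    exact smul_right_injective V (hc0 w) h2
  have : Finite Fqm := Module.finite_of_finite Fq
  have : Finite V := Module.finite_of_finite Fq
  letI : DecidableEq Fqm := Classical.decEq _
  letI : Fintype Fqm := Fintype.ofFinite Fqm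
  letI : Fintype V := Fintype.ofFinite V
  letI : Fintype T := Fintype.ofFinite T
  have hcard := Fintype.card_le_of_injective _ hinj
  rw [Fintype.card_prod] at hcard
  set q := Fintype.card Fq with hq
  have hq2 : 2 ≤ q := Fintype.one_lt_card
  have hV : Fintype.card V = q ^ Module.finrank Fq V := card_eq_pow_finrank (K := Fq)
  have hT : Fintype.card T = q ^ Module.finrank Fq T := card_eq_pow_finrank (K := Fq)
  have hM : Fintype.card {x : Fqm // x ≠ 0} = q ^ Module.finrank Fq Fqm - 1 := by
    rw [← card_eq_pow_finrank (K := Fq) (V := Fqm),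
      Fintype.card_subtype_compl (fun x : Fqm => x = 0), Fintype.card_subtype_eq (0 : Fqm)]
  rw [hV, hT, hM] at hcard
  have hlt : (q ^ Module.finrank Fq Fqm - 1) * q ^ Module.finrank Fq T
      < q ^ Module.finrank Fq Fqm * q ^ Module.finrank Fq T := by
    have h1 : 0 < q ^ Module.finrank Fq T := pow_pos (by omega) _
    have h2 : 0 < q ^ Module.finrank Fq Fqm := pow_pos (by omega) _
    exact (Nat.mul_lt_mul_right h1).mpr (by omega)
  rw [← pow_add] at hlt
  have hle : q ^ (Module.finrank Fq Fqm + Module.finrank Fq T)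
      ≤ q ^ Module.finrank Fq V :=
    Nat.pow_le_pow_right (by omega) (by omega)
  omega

/-- Let `V` be an `F_{q^m}`-vector space of dimension `r`, `U` an
`F_q`-subspace of `V` of dimension `n < mr`. Then for every positive integer `l` with
`lm ≤ rm - n` there exists an `F_{q^m}`-subspace `S` of `V` with `dim_{F_{q^m}} S = l`
and `S ∩ U = {0}`. -/
theorem stmt_10 (Fq Fqm V : Type) [Field Fq] [Fintype Fq] [Field Fqm] [Algebra Fq Fqm]
    [AddCommGroup V] [Module Fqm V] [Module Fq V] [IsScalarTower Fq Fqm V]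
    (m r n : ℕ) (hm : 0 < m) (hr : 0 < r) (hn : 0 < n)
    (hdeg : Module.finrank Fq Fqm = m)
    [FiniteDimensional Fqm V] (hV : Module.finrank Fqm V = r)
    (hnr : n < m * r)
    (U : Submodule Fq V) (hU : Module.finrank Fq U = n)
    (l : ℕ) (hl : 0 < l) (hlm : l * m ≤ r * m - n) :
    ∃ S : Submodule Fqm V, Module.finrank Fqm S = l ∧
      S.restrictScalars Fq ⊓ U = ⊥ := by
  have hFqm : FiniteDimensional Fq Fqm := .of_finrank_pos (hdeg ▸ hm)
  have hFqV : FiniteDimensional Fq V := FiniteDimensional.trans Fq Fqm V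
  have hVq : Module.finrank Fq V = m * r := by
    rw [← Module.finrank_mul_finrank Fq Fqm V, hdeg, hV]
  -- main induction
  have key : ∀ k : ℕ, k * m + n ≤ r * m →
      ∃ S : Submodule Fqm V, Module.finrank Fqm S = k ∧
        S.restrictScalars Fq ⊓ U = ⊥ := by
    intro k
    induction k with
    | zero =>
      intro _
      refine ⟨⊥, finrank_bot _ _, ?_⟩
      rw [restrictScalars_bot, bot_inf_eq]
    | succ k ih =>
      intro hk
      have hk' : k * m + m + n ≤ r * m := by rwa [Nat.succ_mul] at hk
      obtain ⟨S, hS1, hS2⟩ := ih (by omega)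
      set T : Submodule Fq V := S.restrictScalars Fq ⊔ U with hT
      have hrankS : Module.finrank Fq (S.restrictScalars Fq) = m * k := by
        rw [show Module.finrank Fq (S.restrictScalars Fq) = Module.finrank Fq S from rfl,
          ← Module.finrank_mul_finrank Fq Fqm S, hdeg, hS1]
      have hrankT : Module.finrank Fq T = m * k + n := by
        have := Submodule.finrank_sup_add_finrank_inf_eq (S.restrictScalars Fq) U
        rw [← hT, hS2, finrank_bot, hrankS, hU] at this
        omega
      obtain ⟨v, hv⟩ := stmt_10_avoid (Fqm := Fqm) T (by
        rw [hrankT, hdeg, hVq]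
        have : m * k = k * m := Nat.mul_comm m k
        have : m * r = r * m := Nat.mul_comm m r
        omega)
      have hvT : v ∉ T := by
        have := hv 1 one_ne_zero
        rwa [one_smul] at this
      have hvS : v ∉ S := fun h => hvT (le_sup_left (a := S.restrictScalars Fq) h)
      have hv0 : v ≠ 0 := fun h => hvT (h ▸ T.zero_mem)
      refine ⟨S ⊔ (Fqm ∙ v), ?_, ?_⟩
      · have hinf : S ⊓ (Fqm ∙ v) = ⊥ := by
          rw [eq_bot_iff]
          rintro x ⟨hxS, hxv⟩
          obtain ⟨c, rfl⟩ := Submodule.mem_span_singleton.mp hxv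
          rcases eq_or_ne c 0 with rfl | hc
          · simp
          · exact absurd (show v ∈ S by
              have := S.smul_mem c⁻¹ hxS
              rwa [inv_smul_smul₀ hc] at this) hvS
        have := Submodule.finrank_sup_add_finrank_inf_eq S (Fqm ∙ v)
        rw [hinf, finrank_bot, finrank_span_singleton hv0, hS1] at this
        omega
      · rw [eq_bot_iff]
        intro x hx
        rw [Submodule.mem_inf] at hx
        obtain ⟨hxS, hxU⟩ := hx
        rw [Submodule.restrictScalars_mem, Submodule.mem_sup] at hxS
        obtain ⟨s, hs, y, hy, rfl⟩ := hxS
        obtain ⟨c, rfl⟩ := Submodule.mem_span_singleton.mp hy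
        have hcv : c • v ∈ T := by
          have hsT : s ∈ T := le_sup_left (a := S.restrictScalars Fq) hs
          have hxT : s + c • v ∈ T := le_sup_right (b := U) hxU
          have := T.sub_mem hxT hsT
          simpa using this
        rcases eq_or_ne c 0 with rfl | hc
        · rw [zero_smul, add_zero] at hxU ⊢
          have : s ∈ S.restrictScalars Fq ⊓ U := ⟨hs, hxU⟩
          rw [hS2] at this
          exact this
        · exact absurd hcv (hv c hc)
  have hnr' : n ≤ r * m := le_of_lt (by rwa [Nat.mul_comm] at hnr)
  exact key l (by omega)
end

section
/- Let q be a prime power, m, k, ℓ positive integers with ℓ < k, and let f_1, …, f_k: F_{q^m}^ℓ → F_{q^m} be F_q-linear maps that are linearly independent over F_{q^m}, with ⋂_{i=1}^k ker(f_i) = {0}. Let C be their F_{q^m}-span, i.e., C = { x ↦ Σ_i a_i f_i(x) : a_i ∈ F_{q^m} }. Then there exist g_1, …, g_ℓ ∈ C, linearly independent over F_{q^m}, such that ⋂_{i=1}^ℓ ker(g_i) = {0}. -/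
open Module

/-- Auxiliary numeric inequality. -/
lemma aux_num_ineq (c L : ℕ) (hc : 2 ≤ c) (hL : 1 ≤ L) :
    (c - 1) * (c ^ L - 1) + 1 < c ^ (L + 1) := by
  have h1 : 2 ≤ c ^ L := le_trans hc (Nat.le_self_pow (by omega) c)
  have h2 : (c - 1) * (c ^ L - 1) ≤ (c - 1) * c ^ L :=
    Nat.mul_le_mul_left _ (Nat.sub_le _ _)
  have h3 : (c - 1) * c ^ L + c ^ L = c * c ^ L := by
    have hcc : c - 1 + 1 = c := Nat.sub_add_cancel (by omega)
    calc (c - 1) * c ^ L + c ^ L = (c - 1 + 1) * c ^ L := by ring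
      _ = c * c ^ L := by rw [hcc]
  calc (c - 1) * (c ^ L - 1) + 1 ≤ (c - 1) * c ^ L + 1 := Nat.add_le_add_right h2 1
    _ < (c - 1) * c ^ L + c ^ L := Nat.add_lt_add_left (lt_of_lt_of_le one_lt_two h1) _
    _ = c * c ^ L := h3
    _ = c ^ (L + 1) := (pow_succ' c L).symm

/-- Greedy construction: in a finite vector space over a finite field, if a finite set `S`
avoiding `0` is small enough, there is a subspace of dimension `n` avoiding `S`. -/
lemma greedy_subspace (K E : Type) [Field K] [Fintype K] [AddCommGroup E] [Module K E]
    [Fintype E] [DecidableEq E] (S : Finset E) (n : ℕ) (h0 : (0 : E) ∉ S)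
    (h : ∀ j < n, Fintype.card K ^ j * ((Fintype.card K - 1) * S.card + 1) < Fintype.card E) :
    ∃ Z : Submodule K E, Module.finrank K Z = n ∧ ∀ s ∈ S, (s : E) ∉ Z := by
  classical
  induction n with
  | zero =>
    refine ⟨⊥, finrank_bot K E, fun s hs hsbot => ?_⟩
    rw [Submodule.mem_bot] at hsbot
    exact h0 (hsbot ▸ hs)
  | succ n ih =>
    obtain ⟨Z, hZrank, hZS⟩ := ih (fun j hj => h j (Nat.lt_succ_of_lt hj))
    -- the bad set
    set c := Fintype.card K with hc
    have hZcard : (Z : Set E).toFinset.card = c ^ n := by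
      rw [Set.toFinset_card, ← hZrank]
      exact card_eq_pow_finrank
    set Bad : Finset E :=
      (Z : Set E).toFinset ∪ Finset.image (fun p : K × E × E => p.1 • (p.2.1 + p.2.2))
        (((Finset.univ : Finset K).filter (· ≠ 0)) ×ˢ S ×ˢ (Z : Set E).toFinset) with hBad
    have hBadcard : Bad.card ≤ c ^ n * ((c - 1) * S.card + 1) := by
      calc Bad.card ≤ (Z : Set E).toFinset.card +
          (Finset.image (fun p : K × E × E => p.1 • (p.2.1 + p.2.2))
            (((Finset.univ : Finset K).filter (· ≠ 0)) ×ˢ S ×ˢ (Z : Set E).toFinset)).card :=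
            Finset.card_union_le _ _
        _ ≤ c ^ n + (c - 1) * (S.card * (c ^ n)) := by
            refine Nat.add_le_add (le_of_eq hZcard) ?_
            refine le_trans (Finset.card_image_le) ?_
            rw [Finset.card_product, Finset.card_product, hZcard]
            have : ((Finset.univ : Finset K).filter (· ≠ 0)).card = c - 1 := by
              rw [Finset.filter_ne']
              · rw [Finset.card_erase_of_mem (Finset.mem_univ 0), Finset.card_univ]
            rw [this]
        _ = c ^ n * ((c - 1) * S.card + 1) := by ring
    have hlt : Bad.card < Fintype.card E :=
      lt_of_le_of_lt hBadcard (h n (Nat.lt_succ_self n))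
    -- pick a good vector
    have : ∃ v : E, v ∉ Bad := by
      by_contra hcon
      push_neg at hcon
      have : (Finset.univ : Finset E) ⊆ Bad := fun v _ => hcon v
      have := Finset.card_le_card this
      rw [Finset.card_univ] at this
      omega
    obtain ⟨v, hv⟩ := this
    have hvZ : v ∉ Z := by
      intro hmem
      exact hv (Finset.mem_union_left _ (Set.mem_toFinset.mpr hmem))
    have hvbad : ∀ a : K, a ≠ 0 → ∀ s ∈ S, ∀ u ∈ Z, v ≠ a • (s + u) := by
      intro a ha s hs u hu hveq
      refine hv (Finset.mem_union_right _ ?_)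
      refine Finset.mem_image.mpr ⟨(a, s, u), ?_, hveq.symm⟩
      simp [Finset.mem_product, ha, hs, Set.mem_toFinset.mpr hu]
    have hv0 : v ≠ 0 := fun h => hvZ (h ▸ Z.zero_mem)
    refine ⟨Z ⊔ K ∙ v, ?_, ?_⟩
    · have hinf : Z ⊓ (K ∙ v) = ⊥ := by
        rw [eq_bot_iff]
        intro w hw
        obtain ⟨hw1, hw2⟩ := Submodule.mem_inf.mp hw
        obtain ⟨a, rfl⟩ := Submodule.mem_span_singleton.mp hw2
        rcases eq_or_ne a 0 with rfl | ha
        · simp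
        · exfalso
          have h5 := Z.smul_mem a⁻¹ hw1
          rw [smul_smul, inv_mul_cancel₀ ha, one_smul] at h5
          exact hvZ h5
      have := Submodule.finrank_sup_add_finrank_inf_eq Z (K ∙ v)
      rw [hinf, finrank_bot, hZrank, finrank_span_singleton hv0] at this
      omega
    · intro s hs hmem
      obtain ⟨u, hu, w, hw, hsum⟩ := Submodule.mem_sup.mp hmem
      obtain ⟨a, rfl⟩ := Submodule.mem_span_singleton.mp hw
      rcases eq_or_ne a 0 with rfl | ha
      · rw [zero_smul, add_zero] at hsum
        exact hZS s hs (hsum ▸ hu)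
      · refine hvbad a⁻¹ (inv_ne_zero ha) s hs (-u) (Z.neg_mem hu) ?_
        have h5 : a • v = s + -u := by rw [← hsum]; abel
        rw [← h5, smul_smul, inv_mul_cancel₀ ha, one_smul]

/-- Let `f₁, …, f_k : F_{q^m}^ℓ → F_{q^m}` (`ℓ < k`) be `F_q`-linear maps,
linearly independent over `F_{q^m}`, with trivial common kernel, and let `C` be their
`F_{q^m}`-span. Then there exist `g₁, …, g_ℓ ∈ C`, linearly independent over `F_{q^m}`,
with trivial common kernel. -/
theorem stmt_11 (Fq Fqm : Type) [Field Fq] [Fintype Fq] [Field Fqm] [Algebra Fq Fqm]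
    (m k ℓ : ℕ) (hm : 0 < m) (hℓ : 0 < ℓ) (hlk : ℓ < k)
    (hdeg : Module.finrank Fq Fqm = m)
    (f : Fin k → ((Fin ℓ → Fqm) →ₗ[Fq] Fqm))
    (hindep : LinearIndependent Fqm f)
    (hker : (⨅ i, LinearMap.ker (f i)) = ⊥) :
    ∃ g : Fin ℓ → ((Fin ℓ → Fqm) →ₗ[Fq] Fqm),
      (∀ i, g i ∈ Submodule.span Fqm (Set.range f)) ∧
      LinearIndependent Fqm g ∧
      (⨅ i, LinearMap.ker (g i)) = ⊥ := by
  classical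
  haveI hfd : FiniteDimensional Fq Fqm :=
    FiniteDimensional.of_finrank_pos (by rw [hdeg]; exact hm)
  haveI : Finite Fqm := Module.finite_of_finite Fq
  haveI : Fintype Fqm := Fintype.ofFinite _
  set c := Fintype.card Fqm with hc
  have hc2 : 2 ≤ c := Fintype.one_lt_card
  -- the evaluation map
  let Φ : (Fin ℓ → Fqm) →ₗ[Fq] (Fin k → Fqm) := LinearMap.pi f
  have hΦapp : ∀ x i, Φ x i = f i x := fun _ _ => rfl
  have hΦinj : Function.Injective Φ := by
    rw [← LinearMap.ker_eq_bot, ← hker]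
    ext x
    simp only [LinearMap.mem_ker, Submodule.mem_iInf, Φ, LinearMap.pi_apply, funext_iff]
    simp
  -- cardinalities
  have hcardE : Fintype.card (Fin k → Fqm) = c ^ k := by
    rw [Fintype.card_fun, Fintype.card_fin]
  have hcardV : Fintype.card (Fin ℓ → Fqm) = c ^ ℓ := by
    rw [Fintype.card_fun, Fintype.card_fin]
  -- the forbidden set
  set S : Finset (Fin k → Fqm) := (Set.range Φ).toFinset.erase 0 with hS
  have h0 : (0 : Fin k → Fqm) ∉ S := Finset.notMem_erase _ _
  have hScard : S.card ≤ c ^ ℓ - 1 := by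
    have h1 : (Set.range ⇑Φ).toFinset.card ≤ c ^ ℓ := by
      rw [Set.toFinset_card, ← hcardV]
      exact Fintype.card_range_le _
    have h2 : (0 : Fin k → Fqm) ∈ (Set.range ⇑Φ).toFinset :=
      Set.mem_toFinset.mpr ⟨0, map_zero Φ⟩
    rw [hS, Finset.card_erase_of_mem h2]
    omega
  -- counting hypothesis
  have hcount : ∀ j < k - ℓ, c ^ j * ((c - 1) * S.card + 1) < Fintype.card (Fin k → Fqm) := by
    intro j hj
    have haux := aux_num_ineq c ℓ hc2 hℓ
    calc c ^ j * ((c - 1) * S.card + 1) ≤ c ^ j * ((c - 1) * (c ^ ℓ - 1) + 1) :=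
          Nat.mul_le_mul_left _ (Nat.add_le_add_right (Nat.mul_le_mul_left _ hScard) 1)
      _ < c ^ j * c ^ (ℓ + 1) := mul_lt_mul_of_pos_left haux (pow_pos (by omega) j)
      _ = c ^ (j + (ℓ + 1)) := (pow_add c j (ℓ + 1)).symm
      _ ≤ Fintype.card (Fin k → Fqm) := by
          rw [hcardE]; exact Nat.pow_le_pow_right (by omega) (by omega)
  obtain ⟨Z, hZrank, hZS⟩ := greedy_subspace Fqm (Fin k → Fqm) S (k - ℓ) h0 hcount
  -- the quotient map
  have hEfr : Module.finrank Fqm (Fin k → Fqm) = k := by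
    rw [Module.finrank_pi]; exact Fintype.card_fin k
  have hVfr : Module.finrank Fqm (Fin ℓ → Fqm) = ℓ := by
    rw [Module.finrank_pi]; exact Fintype.card_fin ℓ
  have hq := Submodule.finrank_quotient_add_finrank Z
  rw [hZrank, hEfr] at hq
  have hQfr : Module.finrank Fqm ((Fin k → Fqm) ⧸ Z) = ℓ := by omega
  let e : ((Fin k → Fqm) ⧸ Z) ≃ₗ[Fqm] (Fin ℓ → Fqm) :=
    LinearEquiv.ofFinrankEq _ _ (by rw [hQfr, hVfr])
  let ψ : (Fin k → Fqm) →ₗ[Fqm] (Fin ℓ → Fqm) := e.toLinearMap ∘ₗ Z.mkQ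
  have hψker : LinearMap.ker ψ = Z := by
    rw [LinearMap.ker_comp, LinearEquiv.ker, Submodule.comap_bot, Submodule.ker_mkQ]
  have hψsurj : Function.Surjective ψ := by
    rw [← LinearMap.range_eq_top, LinearMap.range_comp, Submodule.range_mkQ,
      Submodule.map_top, LinearMap.range_eq_top]
    exact e.surjective
  let φ : Fin ℓ → ((Fin k → Fqm) →ₗ[Fqm] Fqm) := fun j => LinearMap.proj j ∘ₗ ψ
  have hφapp : ∀ j y, φ j y = ψ y j := fun _ _ => rfl
  let g : Fin ℓ → ((Fin ℓ → Fqm) →ₗ[Fq] Fqm) := fun j => ((φ j).restrictScalars Fq) ∘ₗ Φ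
  have hgapp : ∀ j x, g j x = φ j (Φ x) := fun _ _ => rfl
  refine ⟨g, ?_, ?_, ?_⟩
  · -- membership in the span
    intro j
    have hrepr : g j = ∑ i, (φ j fun t => if i = t then 1 else 0) • f i := by
      apply LinearMap.ext; intro x
      rw [hgapp, LinearMap.pi_apply_eq_sum_univ (φ j) (Φ x), LinearMap.sum_apply]
      refine Finset.sum_congr rfl fun i _ => ?_
      rw [LinearMap.smul_apply, hΦapp, smul_eq_mul, smul_eq_mul, mul_comm]
    rw [hrepr]
    exact Submodule.sum_mem _ fun i _ =>
      Submodule.smul_mem _ _ (Submodule.subset_span ⟨i, rfl⟩)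
  · -- linear independence
    rw [Fintype.linearIndependent_iff]
    intro cv hcv j
    set Ψ : (Fin k → Fqm) →ₗ[Fqm] Fqm := ∑ j', cv j' • φ j' with hΨdef
    have hΨΦ : ∀ x, Ψ (Φ x) = 0 := by
      intro x
      have h2 : (∑ j', cv j' • g j') x = 0 := by rw [hcv]; rfl
      rw [LinearMap.sum_apply] at h2
      rw [hΨdef, LinearMap.sum_apply]
      simp only [LinearMap.smul_apply] at h2 ⊢
      simp only [hgapp] at h2
      exact h2
    have hsum : ∀ y : Fin k → Fqm, Ψ y = ∑ i, y i • Ψ fun t => if i = t then 1 else 0 :=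
      fun y => LinearMap.pi_apply_eq_sum_univ Ψ y
    have hzero : ∀ i, Ψ (fun t => if i = t then 1 else 0) = 0 := by
      have hfl : ∑ i, (Ψ fun t => if i = t then 1 else 0) • f i = 0 := by
        apply LinearMap.ext; intro x
        rw [LinearMap.sum_apply, LinearMap.zero_apply]
        have := (hsum (Φ x)).symm
        calc ∑ i, ((Ψ fun t => if i = t then 1 else 0) • f i) x
            = ∑ i, (Φ x) i • Ψ fun t => if i = t then 1 else 0 := by
              refine Finset.sum_congr rfl fun i _ => ?_
              rw [LinearMap.smul_apply, hΦapp, smul_eq_mul, smul_eq_mul, mul_comm]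
          _ = Ψ (Φ x) := (hsum (Φ x)).symm
          _ = 0 := hΨΦ x
      exact Fintype.linearIndependent_iff.mp hindep _ hfl
    have hΨ0 : ∀ y, Ψ y = 0 := by
      intro y
      rw [hsum y]
      simp [hzero]
    obtain ⟨y, hy⟩ := hψsurj (fun t => if j = t then 1 else 0)
    have h3 := hΨ0 y
    rw [hΨdef, LinearMap.sum_apply] at h3
    simp only [LinearMap.smul_apply, hφapp, hy] at h3
    simpa using h3
  · -- trivial kernel
    rw [eq_bot_iff]
    intro x hx
    rw [Submodule.mem_iInf] at hx
    have hψ0 : ψ (Φ x) = 0 := by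
      funext j
      have h4 := LinearMap.mem_ker.mp (hx j)
      rw [hgapp, hφapp] at h4
      exact h4
    have hZmem : Φ x ∈ Z := hψker ▸ LinearMap.mem_ker.mpr hψ0
    have hx0 : Φ x = 0 := by
      by_contra hne
      exact hZS _ (Finset.mem_erase.mpr ⟨hne, Set.mem_toFinset.mpr ⟨x, rfl⟩⟩) hZmem
    have := hΦinj (show Φ x = Φ 0 by rw [hx0, map_zero])
    simpa using this
end

section
/- Let q be a prime power, m, k, ℓ positive integers with ℓ < k, and let f_1, …, f_k: F_{q^m}^ℓ → F_{q^m} be F_q-linear maps that are linearly independent over F_{q^m}, with ⋂_{i=1}^k ker(f_i) = {0}, and let C be their F_{q^m}-span. Then there exists an F_q-linear bijection φ of F_{q^m}^ℓ and F_q-linear maps g_{ℓ+1}, …, g_k: F_{q^m}^ℓ → F_{q^m} such that C ∘ φ = { f ∘ φ : f ∈ C } equals the F_{q^m}-span of the ℓ coordinate projections π_1, …, π_ℓ (π_i(x_1, …, x_ℓ) = x_i) together with g_{ℓ+1}, …, g_k. -/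
open Module Submodule Set


lemma aux_extend {K M : Type*} [Field K] [AddCommGroup M] [Module K M] {n r : ℕ}
    (F : Fin n → M) (hF : LinearIndependent K F) (π : Fin r → M)
    (hπ : LinearIndependent K π)
    (hmem : ∀ i, π i ∈ Submodule.span K (Set.range F)) :
    ∃ g : Fin (n - r) → M,
      Submodule.span K (Set.range π ∪ Set.range g) = Submodule.span K (Set.range F) := by
  classical
  set D : Submodule K M := Submodule.span K (Set.range F) with hD
  haveI : FiniteDimensional K D := FiniteDimensional.span_of_finite K (Set.finite_range F)
  have hDrank : Module.finrank K D = n := by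
    rw [hD, finrank_span_eq_card hF, Fintype.card_fin]
  set π' : Fin r → D := fun i => ⟨π i, hmem i⟩ with hπ'def
  have hπ' : LinearIndependent K π' := by
    apply LinearIndependent.of_comp D.subtype
    show LinearIndependent K (fun i => (π' i : M))
    exact hπ
  have hs : LinearIndepOn K id (Set.range π') := (linearIndepOn_id_range_iff hπ'.injective).mpr hπ'
  set sE : Set D := hs.extend (Set.subset_univ _) with hsE
  set b : Basis sE K D := Module.Basis.extend hs with hb
  have hsub : Set.range π' ⊆ sE := hs.subset_extend _
  have hspan : Submodule.span K sE = ⊤ := by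
    rw [← b.span_eq, hb, Module.Basis.coe_extend, Subtype.range_coe]
  haveI : Fintype sE := FiniteDimensional.fintypeBasisIndex b
  have hcardE : Nat.card sE = n := by
    rw [Nat.card_eq_fintype_card, ← Module.finrank_eq_card_basis b, hDrank]
  set t : Set D := sE \ Set.range π' with ht
  have htfin : t.Finite := (sE.toFinite).subset Set.diff_subset
  have hcardt : Nat.card t = n - r := by
    rw [Nat.card_coe_set_eq, ht, Set.ncard_diff hsub (Set.finite_range π'),
      ← Nat.card_coe_set_eq, ← Nat.card_coe_set_eq, hcardE,
      Nat.card_range_of_injective hπ'.injective, Nat.card_eq_fintype_card, Fintype.card_fin]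
  haveI : Finite t := htfin
  haveI : Fintype t := htfin.fintype
  have hcardt' : Fintype.card t = n - r := by rw [← Nat.card_eq_fintype_card, hcardt]
  set e : t ≃ Fin (n - r) := Fintype.equivFinOfCardEq hcardt' with he
  refine ⟨fun j => ((e.symm j : D) : M), ?_⟩
  have hrg : Set.range (fun j => (((e.symm j : t) : D) : M)) = D.subtype '' t := by
    have h1 : Set.range (fun j => (((e.symm j : t) : D) : M))
        = Set.range (fun y : t => ((y : D) : M)) :=
      Function.Surjective.range_comp e.symm.surjective (fun y : t => ((y : D) : M))
    rw [h1]
    ext x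
    constructor
    · rintro ⟨y, rfl⟩; exact ⟨(y : D), y.2, rfl⟩
    · rintro ⟨d, hd, rfl⟩; exact ⟨⟨d, hd⟩, rfl⟩
  have hrπ : Set.range π = D.subtype '' (Set.range π') := by
    rw [← Set.range_comp]; rfl
  rw [hrg, hrπ, ← Set.image_union, Submodule.span_image,
    Set.union_diff_cancel hsub, hspan, Submodule.map_subtype_top]


lemma aux_existsN (Fq Fqm : Type*) [Field Fq] [Fintype Fq] [Field Fqm] [Algebra Fq Fqm]
    [FiniteDimensional Fq Fqm]
    (m k ℓ : ℕ) (hm : 0 < m) (hℓ : 0 < ℓ) (hlk : ℓ < k)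
    (hdeg : Module.finrank Fq Fqm = m)
    (U : Submodule Fq (Fin k → Fqm)) (hU : Module.finrank Fq U ≤ m * ℓ) :
    ∀ j, j ≤ k - ℓ → ∃ N : Submodule Fqm (Fin k → Fqm),
      Module.finrank Fqm N = j ∧ N.restrictScalars Fq ⊓ U = ⊥ := by
  classical
  haveI : Finite Fqm := Module.finite_of_finite Fq
  haveI : Fintype Fqm := Fintype.ofFinite Fqm
  haveI : Module.Finite Fq (Fin k → Fqm) := Module.Finite.trans Fqm _
  have hq2 : 2 ≤ Fintype.card Fq := Fintype.one_lt_card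
  set q : ℕ := Fintype.card Fq with hq
  have hcardFqm : Fintype.card Fqm = q ^ m := by
    rw [card_eq_pow_finrank (K := Fq) (V := Fqm), hdeg]
  have hWrank : Module.finrank Fq (Fin k → Fqm) = m * k := by
    rw [← Module.finrank_mul_finrank Fq Fqm (Fin k → Fqm), hdeg,
      Module.finrank_pi, Fintype.card_fin]
  have hcardW : Nat.card (Fin k → Fqm) = q ^ (m * k) := by
    rw [Nat.card_eq_fintype_card, card_eq_pow_finrank (K := Fq) (V := (Fin k → Fqm)), hWrank]
  intro j
  induction j with
  | zero =>
    intro _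
    refine ⟨⊥, finrank_bot _ _, ?_⟩
    rw [Submodule.restrictScalars_bot, bot_inf_eq]
  | succ j ih =>
    intro hj1
    obtain ⟨N, hNrank, hNU⟩ := ih (Nat.le_of_succ_le hj1)
    set T : Submodule Fq (Fin k → Fqm) := N.restrictScalars Fq ⊔ U with hT
    have hNrank' : Module.finrank Fq (N.restrictScalars Fq) = m * j := by
      have h1 : Module.finrank Fq (N.restrictScalars Fq) = Module.finrank Fq N :=
        ((Submodule.restrictScalarsEquiv Fq Fqm _ N).restrictScalars Fq).finrank_eq
    -- tower
      rw [h1, ← Module.finrank_mul_finrank Fq Fqm N, hdeg, hNrank]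
    have hTrank : Module.finrank Fq T ≤ m * j + m * ℓ := by
      refine le_trans (Submodule.finrank_add_le_finrank_add_finrank _ _) ?_
      rw [hNrank']
      exact Nat.add_le_add_left hU _
    -- counting
    set μ : Fqmˣ × T → (Fin k → Fqm) := fun p => (p.1 : Fqm) • (p.2 : Fin k → Fqm) with hμ
    have hcardT : Nat.card T = q ^ Module.finrank Fq T := by
      rw [Nat.card_eq_fintype_card, card_eq_pow_finrank (K := Fq) (V := T)]
    have hlt : Nat.card (Fqmˣ × T) < Nat.card (Fin k → Fqm) := by
      rw [Nat.card_prod, Nat.card_units, Nat.card_eq_fintype_card, hcardFqm, hcardT, hcardW]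
      have hpow : Module.finrank Fq T + m ≤ m * k := by
        have h2 : j + 1 + ℓ ≤ k := by omega
        calc Module.finrank Fq T + m ≤ (m * j + m * ℓ) + m := by omega
          _ = m * (j + 1 + ℓ) := by ring
          _ ≤ m * k := Nat.mul_le_mul_left m h2
      calc (q ^ m - 1) * q ^ Module.finrank Fq T
          < q ^ m * q ^ Module.finrank Fq T := by
            have hqpos : 0 < q := by omega
            exact (Nat.mul_lt_mul_right (Nat.pow_pos hqpos)).mpr
              (Nat.sub_lt (Nat.pow_pos hqpos) one_pos)
        _ = q ^ (Module.finrank Fq T + m) := by rw [← pow_add, Nat.add_comm]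
        _ ≤ q ^ (m * k) := Nat.pow_le_pow_right (by omega) hpow
    have hns : ¬ Function.Surjective μ := by
      intro h
      exact absurd (Nat.card_le_card_of_surjective μ h) (not_le.mpr hlt)
    rw [Function.Surjective] at hns
    push_neg at hns
    obtain ⟨v, hv⟩ := hns
    have hv' : ∀ (α : Fqm), α ≠ 0 → ∀ w ∈ T, α • w ≠ v := by
      intro α hα w hw
      exact hv (Units.mk0 α hα, ⟨w, hw⟩)
    have hv0 : v ≠ 0 := by
      intro h
      exact hv' 1 one_ne_zero 0 (zero_mem T) (by simp [h])
    have hvN : v ∉ N := by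
      intro h
      refine hv' 1 one_ne_zero v ?_ (one_smul _ _)
      exact Submodule.mem_sup_left ((Submodule.restrictScalars_mem Fq N v).mpr h)
    refine ⟨N ⊔ Submodule.span Fqm {v}, ?_, ?_⟩
    · have hle : Module.finrank Fqm (N ⊔ Submodule.span Fqm {v} : Submodule Fqm _) ≤ j + 1 := by
        refine le_trans (Submodule.finrank_add_le_finrank_add_finrank _ _) ?_
        rw [hNrank, finrank_span_singleton hv0]
      have hgt : j < Module.finrank Fqm (N ⊔ Submodule.span Fqm {v} : Submodule Fqm _) := by
        rw [← hNrank]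
        refine Submodule.finrank_lt_finrank_of_lt (lt_of_le_of_ne le_sup_left ?_)
        intro hEq
        exact hvN (hEq ▸ Submodule.mem_sup_right (Submodule.mem_span_singleton_self v))
      omega
    · rw [eq_bot_iff]
      intro x hx
      obtain ⟨hx1, hx2⟩ := Submodule.mem_inf.mp hx
      have hx1' : x ∈ N ⊔ Submodule.span Fqm {v} :=
        (Submodule.restrictScalars_mem Fq _ x).mp hx1
      obtain ⟨nn, hn, s, hs, hx⟩ := Submodule.mem_sup.mp hx1'
      obtain ⟨α, rfl⟩ := Submodule.mem_span_singleton.mp hs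
      by_cases hα : α = 0
      · subst hα
        rw [zero_smul, add_zero] at hx
        subst hx
        have hmem2 : nn ∈ N.restrictScalars Fq ⊓ U :=
          ⟨(Submodule.restrictScalars_mem Fq N nn).mpr hn, hx2⟩
        rw [hNU] at hmem2
        exact hmem2
      · exfalso
        have hwT : x - nn ∈ T := by
          refine Submodule.sub_mem T (Submodule.mem_sup_right hx2) ?_
          exact Submodule.mem_sup_left ((Submodule.restrictScalars_mem Fq N nn).mpr hn)
        refine hv' α⁻¹ (inv_ne_zero hα) (x - nn) hwT ?_
        rw [← hx]
        rw [add_sub_cancel_left, smul_smul, inv_mul_cancel₀ hα, one_smul]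

section Aux


lemma aux_proj_indep (Fq Fqm : Type*) [Field Fq] [Field Fqm] [Algebra Fq Fqm] (ℓ : ℕ) :
    LinearIndependent Fqm
      (fun i : Fin ℓ => (LinearMap.proj i : (Fin ℓ → Fqm) →ₗ[Fq] Fqm)) := by
  classical
  rw [Fintype.linearIndependent_iff]
  intro gco hsum i
  have h := LinearMap.congr_fun hsum (Pi.single i 1)
  simpa [LinearMap.proj_apply, Pi.single_apply, smul_eq_mul, mul_ite,
    Finset.sum_ite_eq'] using h

end Aux



/-- With `f₁, …, f_k` as in Statement 11 and `C` their `F_{q^m}`-span,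
there exist an `F_q`-linear bijection `φ` of `F_{q^m}^ℓ` and maps
`g_{ℓ+1}, …, g_k` such that `C ∘ φ` equals the `F_{q^m}`-span of the `ℓ` coordinate
projections together with the `g_j`'s. -/
theorem stmt_12 (Fq Fqm : Type) [Field Fq] [Fintype Fq] [Field Fqm] [Algebra Fq Fqm]
    (m k ℓ : ℕ) (hm : 0 < m) (hℓ : 0 < ℓ) (hlk : ℓ < k)
    (hdeg : Module.finrank Fq Fqm = m)
    (f : Fin k → ((Fin ℓ → Fqm) →ₗ[Fq] Fqm))
    (hindep : LinearIndependent Fqm f)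
    (hker : (⨅ i, LinearMap.ker (f i)) = ⊥) :
    ∃ (φ : (Fin ℓ → Fqm) ≃ₗ[Fq] (Fin ℓ → Fqm))
      (g : Fin (k - ℓ) → ((Fin ℓ → Fqm) →ₗ[Fq] Fqm)),
      (fun c => c ∘ₗ φ.toLinearMap) ''
          ((Submodule.span Fqm (Set.range f) : Submodule Fqm _) :
            Set ((Fin ℓ → Fqm) →ₗ[Fq] Fqm)) =
        ((Submodule.span Fqm
          ((Set.range fun i : Fin ℓ =>
            (LinearMap.proj i : (Fin ℓ → Fqm) →ₗ[Fq] Fqm)) ∪ Set.range g)) :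
          Set ((Fin ℓ → Fqm) →ₗ[Fq] Fqm)) := by
  classical
  haveI hfd : FiniteDimensional Fq Fqm :=
    Module.finite_of_finrank_pos (by rw [hdeg]; exact hm)
  haveI : Finite Fqm := Module.finite_of_finite Fq
  haveI : Module.Finite Fq (Fin ℓ → Fqm) := Module.Finite.trans Fqm _
  haveI : Module.Finite Fq (Fin k → Fqm) := Module.Finite.trans Fqm _
  set ev : (Fin ℓ → Fqm) →ₗ[Fq] (Fin k → Fqm) := LinearMap.pi f with hev
  have hevinj : Function.Injective ev := by
    rw [← LinearMap.ker_eq_bot, hev, LinearMap.ker_pi, hker]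
  set U : Submodule Fq (Fin k → Fqm) := LinearMap.range ev with hU
  have hVrank : Module.finrank Fq (Fin ℓ → Fqm) = m * ℓ := by
    rw [← Module.finrank_mul_finrank Fq Fqm (Fin ℓ → Fqm), hdeg,
      Module.finrank_pi, Fintype.card_fin]
  have hUle : Module.finrank Fq U ≤ m * ℓ := hVrank ▸ LinearMap.finrank_range_le ev
  obtain ⟨N, hNrank, hNU⟩ := aux_existsN Fq Fqm m k ℓ hm hℓ hlk hdeg U hUle (k - ℓ) le_rfl
  have hQrank : Module.finrank Fqm ((Fin k → Fqm) ⧸ N) = ℓ := by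
    have h1 := Submodule.finrank_quotient_add_finrank N
    have hW : Module.finrank Fqm (Fin k → Fqm) = k := by
      rw [Module.finrank_pi, Fintype.card_fin]
    rw [hW, hNrank] at h1
    omega
  set bq : Basis (Fin ℓ) Fqm ((Fin k → Fqm) ⧸ N) :=
    Module.finBasisOfFinrankEq Fqm _ hQrank with hbq
  set ρ : (Fin k → Fqm) →ₗ[Fqm] (Fin ℓ → Fqm) := bq.equivFun.toLinearMap ∘ₗ N.mkQ with hρ
  set ψ : (Fin ℓ → Fqm) →ₗ[Fq] (Fin ℓ → Fqm) := (ρ.restrictScalars Fq) ∘ₗ ev with hψ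
  have hψinj : Function.Injective ψ := by
    rw [← LinearMap.ker_eq_bot, eq_bot_iff]
    intro x hx
    have hx0 : ρ (ev x) = 0 := hx
    have hmk : N.mkQ (ev x) = 0 := by
      have := bq.equivFun.injective (a₁ := N.mkQ (ev x)) (a₂ := 0) (by
        rw [map_zero]
        exact hx0)
      exact this
    have hevN : ev x ∈ N := (Submodule.Quotient.mk_eq_zero N).mp hmk
    have hmem : ev x ∈ N.restrictScalars Fq ⊓ U :=
      ⟨(Submodule.restrictScalars_mem Fq N _).mpr hevN, LinearMap.mem_range_self ev x⟩
    rw [hNU] at hmem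
    have : ev x = 0 := hmem
    have : ev x = ev 0 := by rw [this, map_zero]
    simpa using hevinj this
  have hψbij : Function.Bijective ψ :=
    ⟨hψinj, LinearMap.injective_iff_surjective.mp hψinj⟩
  set φ : (Fin ℓ → Fqm) ≃ₗ[Fq] (Fin ℓ → Fqm) :=
    (LinearEquiv.ofBijective ψ hψbij).symm with hφ
  have hψφ : ∀ x, ψ (φ x) = x := fun x =>
    (LinearEquiv.ofBijective ψ hψbij).apply_symm_apply x
  set c : Fin ℓ → ((Fin ℓ → Fqm) →ₗ[Fq] Fqm) :=
    fun i => (LinearMap.proj i : (Fin ℓ → Fqm) →ₗ[Fq] Fqm) ∘ₗ ψ with hc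
  have hcφ : ∀ i, (c i) ∘ₗ φ.toLinearMap = (LinearMap.proj i : (Fin ℓ → Fqm) →ₗ[Fq] Fqm) := by
    intro i
    refine LinearMap.ext fun x => ?_
    simp only [hc, LinearMap.comp_apply, LinearEquiv.coe_coe, LinearMap.proj_apply]
    rw [hψφ x]
  have hcC : ∀ i, c i ∈ Submodule.span Fqm (Set.range f) := by
    intro i
    have hcsum : c i = ∑ j, (ρ (fun j' => if j = j' then (1 : Fqm) else 0) i) • f j := by
      refine LinearMap.ext fun x => ?_
      have h1 : c i x = ρ (ev x) i := rfl
      rw [h1, pi_eq_sum_univ (ev x), map_sum]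
      simp only [map_smul, Finset.sum_apply, Pi.smul_apply, smul_eq_mul,
        LinearMap.sum_apply, LinearMap.smul_apply]
      refine Finset.sum_congr rfl fun j _ => ?_
      have : ev x j = f j x := rfl
      rw [this, mul_comm]
    rw [hcsum]
    exact Submodule.sum_mem _ fun j _ =>
      Submodule.smul_mem _ _ (Submodule.subset_span ⟨j, rfl⟩)
  -- the precomposition equivalence
  set Ψ : ((Fin ℓ → Fqm) →ₗ[Fq] Fqm) →ₗ[Fqm] ((Fin ℓ → Fqm) →ₗ[Fq] Fqm) :=
    { toFun := fun cc => cc ∘ₗ φ.toLinearMap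
      map_add' := fun a b => by ext x; simp
      map_smul' := fun a b => by ext x; simp } with hΨ
  have hΨapp : ∀ cc, Ψ cc = cc ∘ₗ φ.toLinearMap := fun _ => rfl
  have hΨker : LinearMap.ker Ψ = ⊥ := by
    rw [LinearMap.ker_eq_bot]
    intro a b hab
    refine LinearMap.ext fun x => ?_
    have h := LinearMap.congr_fun hab (φ.symm x)
    simpa [hΨapp] using h
  set F : Fin k → ((Fin ℓ → Fqm) →ₗ[Fq] Fqm) := fun i => (f i) ∘ₗ φ.toLinearMap with hF
  have hFind : LinearIndependent Fqm F := by
    have := hindep.map' Ψ hΨker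
    exact this
  have hmapspan : Submodule.map Ψ (Submodule.span Fqm (Set.range f))
      = Submodule.span Fqm (Set.range F) := by
    rw [Submodule.map_span, ← Set.range_comp]
    rfl
  have hπind := aux_proj_indep Fq Fqm ℓ
  have hπmem : ∀ i, (LinearMap.proj i : (Fin ℓ → Fqm) →ₗ[Fq] Fqm)
      ∈ Submodule.span Fqm (Set.range F) := by
    intro i
    have hmem : (LinearMap.proj i : (Fin ℓ → Fqm) →ₗ[Fq] Fqm)
        ∈ Submodule.map Ψ (Submodule.span Fqm (Set.range f)) :=
      ⟨c i, hcC i, hcφ i⟩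
    rwa [hmapspan] at hmem
  obtain ⟨g, hg⟩ := aux_extend F hFind _ hπind hπmem
  refine ⟨φ, g, ?_⟩
  calc (fun cc => cc ∘ₗ φ.toLinearMap) ''
        ((Submodule.span Fqm (Set.range f) : Submodule Fqm _) : Set _)
      = ⇑Ψ '' ((Submodule.span Fqm (Set.range f) : Submodule Fqm _) : Set _) := rfl
    _ = ((Submodule.map Ψ (Submodule.span Fqm (Set.range f)) : Submodule Fqm _) : Set _) :=
        (Submodule.map_coe Ψ _).symm
    _ = _ := by rw [hmapspan, ← hg]
end

section
/- Let q be a prime power and t, ℓ, e, g positive integers with e < t. Consider the tower of fields F_q ⊆ F_{q^t} ⊆ F_{q^{tℓ}}. Let S_1 be an F_q-subspace of F_{q^t} with dim_{F_q}(S_1) = e and 1 ∈ S_1, and let S_2 be an F_{q^t}-subspace of F_{q^{tℓ}} with dim_{F_q}(S_2) = ge. Then U = S_1 × S_2 ⊆ F_{q^{tℓ}}^2 is an F_q-subspace of dimension e + ge such that for every w ∈ F_{q^{tℓ}}^2, dim_{F_q}(U ∩ span_{F_{q^{tℓ}}}{w}) ∈ {0, e, ge}. -/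
noncomputable def prodEquivAux {R M N : Type*} [Semiring R] [AddCommMonoid M] [AddCommMonoid N]
    [Module R M] [Module R N] (p : Submodule R M) (q : Submodule R N) :
    ↥(p.prod q) ≃ₗ[R] ↥p × ↥q where
  toFun x := (⟨x.1.1, x.2.1⟩, ⟨x.1.2, x.2.2⟩)
  invFun x := ⟨(x.1.1, x.2.1), ⟨x.1.2, x.2.2⟩⟩
  left_inv _ := rfl
  right_inv _ := rfl
  map_add' _ _ := rfl
  map_smul' _ _ := rfl

lemma finrank_prod_sub {R M N : Type*} [Field R] [AddCommGroup M] [AddCommGroup N]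
    [Module R M] [Module R N] (p : Submodule R M) (q : Submodule R N)
    [FiniteDimensional R p] [FiniteDimensional R q] :
    Module.finrank R (p.prod q) = Module.finrank R p + Module.finrank R q :=
  (prodEquivAux p q).finrank_eq.trans (Module.finrank_prod)

/-- In the tower `F_q ⊆ F_{q^t} ⊆ F_{q^{tℓ}}`, let `S₁` be an
`F_q`-subspace of `F_{q^t}` of dimension `e` containing `1`, and `S₂` an
`F_{q^t}`-subspace of `F_{q^{tℓ}}` with `dim_{F_q} S₂ = ge`. Then
`U = S₁ × S₂ ⊆ F_{q^{tℓ}}²` is an `F_q`-subspace of dimension `e + ge` such that for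
every `w ∈ F_{q^{tℓ}}²`, `dim_{F_q}(U ∩ ⟨w⟩_{F_{q^{tℓ}}}) ∈ {0, e, ge}`. -/
theorem stmt_16 (Fq Fqt Fqtl : Type) [Field Fq] [Fintype Fq] [Field Fqt] [Field Fqtl]
    [Algebra Fq Fqt] [Algebra Fqt Fqtl] [Algebra Fq Fqtl] [IsScalarTower Fq Fqt Fqtl]
    (t ℓ e g : ℕ) (ht : 0 < t) (hℓ : 0 < ℓ) (he : 0 < e) (hg : 0 < g)
    (het : e < t)
    (hdegt : Module.finrank Fq Fqt = t)
    (hdegl : Module.finrank Fqt Fqtl = ℓ)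
    (S₁ : Submodule Fq Fqt) (hS₁ : Module.finrank Fq S₁ = e) (h1 : (1 : Fqt) ∈ S₁)
    (S₂ : Submodule Fqt Fqtl)
    (hS₂ : Module.finrank Fq (S₂.restrictScalars Fq) = g * e)
    (U : Submodule Fq (Fqtl × Fqtl))
    (hU : U = (S₁.map ((Algebra.linearMap Fqt Fqtl).restrictScalars Fq)).prod
      (S₂.restrictScalars Fq)) :
    Module.finrank Fq U = e + g * e ∧
    ∀ w : Fqtl × Fqtl,
      Module.finrank Fq ↥(U ⊓ (Submodule.span Fqtl {w}).restrictScalars Fq)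
        ∈ ({0, e, g * e} : Set ℕ) := by
  set j : Fqt →ₗ[Fq] Fqtl := (Algebra.linearMap Fqt Fqtl).restrictScalars Fq with hj
  have hjinj : Function.Injective j := fun x y hxy => by
    exact (algebraMap Fqt Fqtl).injective hxy
  have hfin1 : FiniteDimensional Fq S₁ := .of_finrank_pos (by omega)
  have hfin2 : FiniteDimensional Fq (S₂.restrictScalars Fq) := .of_finrank_pos
    (by rw [hS₂]; positivity)
  have hmapfr : Module.finrank Fq (S₁.map j) = e := by
    rw [← (S₁.equivMapOfInjective j hjinj).finrank_eq, hS₁]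
  have hfinmap : FiniteDimensional Fq (S₁.map j) := .of_finrank_pos (by omega)
  constructor
  · rw [hU, finrank_prod_sub, hmapfr, hS₂]
  · intro w
    simp only [Set.mem_insert_iff, Set.mem_singleton_iff]
    obtain ⟨a, b⟩ := w
    by_cases ha : a = 0
    · by_cases hb : b = 0
      · -- w = 0
        subst ha hb
        left
        have h0 : (Submodule.span Fqtl {((0 : Fqtl), (0 : Fqtl))}) = ⊥ := by simp
        rw [h0]
        have h0' : U ⊓ (⊥ : Submodule Fqtl (Fqtl × Fqtl)).restrictScalars Fq = ⊥ := by
          rw [Submodule.restrictScalars_bot, inf_bot_eq]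
        rw [h0', finrank_bot]
      · -- a = 0, b ≠ 0 : intersection is ⊥ × S₂
        right; right
        subst ha
        have hiff : U ⊓ (Submodule.span Fqtl {((0 : Fqtl), b)}).restrictScalars Fq
            = (⊥ : Submodule Fq Fqtl).prod (S₂.restrictScalars Fq) := by
          apply le_antisymm
          · intro x hx
            obtain ⟨hxU, hxs⟩ := Submodule.mem_inf.mp hx
            rw [Submodule.restrictScalars_mem, Submodule.mem_span_singleton] at hxs
            obtain ⟨c, hc⟩ := hxs
            rw [hU, Submodule.mem_prod] at hxU
            rw [Submodule.mem_prod]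
            refine ⟨?_, hxU.2⟩
            have : x.1 = c * 0 := by rw [← hc]; rfl
            simp [this]
          · intro x hx
            rw [Submodule.mem_prod] at hx
            obtain ⟨hx1, hx2⟩ := hx
            have hx0 : x.1 = 0 := hx1
            rw [Submodule.mem_inf]
            constructor
            · rw [hU, Submodule.mem_prod]
              exact ⟨by rw [hx0]; exact Submodule.zero_mem _, hx2⟩
            · rw [Submodule.restrictScalars_mem, Submodule.mem_span_singleton]
              refine ⟨x.2 * b⁻¹, ?_⟩
              have : (x.2 * b⁻¹) • ((0 : Fqtl), b) = (0, x.2) := by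
                rw [Prod.smul_mk, smul_zero, smul_eq_mul, mul_assoc,
                  inv_mul_cancel₀ hb, mul_one]
              rw [this, ← hx0]
        rw [hiff, finrank_prod_sub, finrank_bot, hS₂, zero_add]
    · -- a ≠ 0
      set f : Fqt →ₗ[Fq] Fqtl × Fqtl :=
        ((LinearMap.toSpanSingleton Fqtl (Fqtl × Fqtl) (a, b)).restrictScalars Fq).comp
          (a⁻¹ • j) with hf
      have hfapp : ∀ c : Fqt, f c = ((a⁻¹ * algebraMap Fqt Fqtl c) • ((a : Fqtl), b)) :=
        fun c => rfl
      have hfinj : Function.Injective f := by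
        intro x y hxy
        rw [hfapp, hfapp] at hxy
        have h1 := congrArg Prod.fst hxy
        simp only [Prod.smul_fst, smul_eq_mul] at h1
        have h2 := mul_right_cancel₀ ha h1
        have h3 := mul_left_cancel₀ (inv_ne_zero ha) h2
        exact (algebraMap Fqt Fqtl).injective h3
      by_cases hmem : a⁻¹ * b ∈ S₂
      · -- intersection = f '' S₁, dimension e
        right; left
        have key : U ⊓ (Submodule.span Fqtl {((a : Fqtl), b)}).restrictScalars Fq
            = S₁.map f := by
          apply le_antisymm
          · intro x hx
            obtain ⟨hxU, hxs⟩ := Submodule.mem_inf.mp hx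
            rw [Submodule.restrictScalars_mem, Submodule.mem_span_singleton] at hxs
            obtain ⟨lam, hlam⟩ := hxs
            rw [hU, Submodule.mem_prod] at hxU
            obtain ⟨h1', h2'⟩ := hxU
            have hx1 : x.1 = lam * a := by rw [← hlam]; rfl
            obtain ⟨c, hc, hcx⟩ := h1'
            refine ⟨c, hc, ?_⟩
            have hcval : algebraMap Fqt Fqtl c = lam * a := by rw [← hx1]; exact hcx
            have hlamval : lam = a⁻¹ * algebraMap Fqt Fqtl c := by
              field_simp [hcval]; exact hcval.symm
            rw [hfapp, ← hlamval, hlam]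
          · rintro x ⟨c, hc, rfl⟩
            rw [hfapp]
            rw [Submodule.mem_inf]
            constructor
            · rw [hU, Submodule.mem_prod]
              constructor
              · refine ⟨c, hc, ?_⟩
                show algebraMap Fqt Fqtl c = (a⁻¹ * algebraMap Fqt Fqtl c) * a
                field_simp [mul_comm]
              · show (a⁻¹ * algebraMap Fqt Fqtl c) * b ∈ S₂
                have heq : (a⁻¹ * algebraMap Fqt Fqtl c) * b = c • (a⁻¹ * b) := by
                  rw [Algebra.smul_def]; ring
                rw [heq]
                exact S₂.smul_mem c hmem
            · rw [Submodule.restrictScalars_mem]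
              exact Submodule.smul_mem _ _ (Submodule.mem_span_singleton_self _)
        rw [key, ← (S₁.equivMapOfInjective f hfinj).finrank_eq, hS₁]
      · -- intersection = ⊥
        left
        have key : U ⊓ (Submodule.span Fqtl {((a : Fqtl), b)}).restrictScalars Fq = ⊥ := by
          rw [eq_bot_iff]
          intro x hx
          obtain ⟨hxU, hxs⟩ := Submodule.mem_inf.mp hx
          rw [Submodule.restrictScalars_mem, Submodule.mem_span_singleton] at hxs
          obtain ⟨lam, hlam⟩ := hxs
          rw [hU, Submodule.mem_prod] at hxU
          obtain ⟨h1', h2'⟩ := hxU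
          have hx1 : x.1 = lam * a := by rw [← hlam]; rfl
          have hx2 : x.2 = lam * b := by rw [← hlam]; rfl
          obtain ⟨c, hc, hcx⟩ := h1'
          by_cases hl : lam = 0
          · have : x = 0 := by rw [← hlam, hl, zero_smul]
            simp [this]
          · exfalso
            have hcval : algebraMap Fqt Fqtl c = lam * a := by rw [← hx1]; exact hcx
            have hcne : c ≠ 0 := by
              intro h0
              rw [h0, map_zero] at hcval
              rcases mul_eq_zero.mp hcval.symm with h | h
              · exact hl h
              · exact ha h
            have hlamval : lam = a⁻¹ * algebraMap Fqt Fqtl c := by field_simp [hcval]; exact hcval.symm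
            apply hmem
            have hacne : (algebraMap Fqt Fqtl) c ≠ 0 := by
              simpa using hcne
            have heq : a⁻¹ * b = c⁻¹ • (x.2) := by
              rw [Algebra.smul_def, hx2, hlamval, map_inv₀]
              field_simp
            rw [heq]
            exact S₂.smul_mem _ h2'
        rw [key, finrank_bot]
end

section
/- Let q be a prime power and t, g, e, ℓ positive integers with e < t, ge ≤ ℓt, t dividing ge, and e not dividing tℓ. Then there exists a non-degenerate F_{q^{tℓ}}-linear rank metric code C ⊆ F_{q^{tℓ}}^{e+ge} of F_{q^{tℓ}}-dimension 2 such that every nonzero codeword of C has rank weight equal to e, ge, or e + ge; in particular, C is e-divisible although e does not divide tℓ. -/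
set_option maxHeartbeats 1000000
set_option synthInstance.maxHeartbeats 400000

open Polynomial Module

/-- Counting fixed points of `x ↦ x ^ Q` in a finite field. -/
lemma card_pow_fixed (L : Type) [Field L] [Fintype L] (Q : ℕ) (hQ1 : 1 < Q)
    (hQ0 : (Q : L) = 0) (hdvd : Q - 1 ∣ Fintype.card L - 1) :
    Nat.card {x : L // x ^ Q = x} = Q := by
  classical
  set f : L[X] := X ^ Q - X with hf
  have hfne : f ≠ 0 := FiniteField.X_pow_card_sub_X_ne_zero L hQ1
  have hdeg : f.natDegree = Q := FiniteField.X_pow_card_sub_X_natDegree_eq L hQ1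
  have hsep : f.Separable := by
    rw [separable_def]
    have hder : derivative f = -1 := by
      rw [hf, derivative_sub, derivative_X_pow, derivative_X, hQ0, C_0, zero_mul, zero_sub]
    rw [hder]
    exact isCoprime_one_right.neg_right
  have hN1 : 1 < Fintype.card L := Fintype.one_lt_card
  obtain ⟨k, hk⟩ := hdvd
  have hdvd2 : f ∣ X ^ Fintype.card L - X := by
    have e1 : (Q - 1) + 1 = Q := by omega
    have e2 : (Fintype.card L - 1) + 1 = Fintype.card L := by omega
    have h1 : f = X * (X ^ (Q - 1) - 1) := by
      rw [hf, mul_sub, mul_one, ← pow_succ', e1]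
    have h2 : (X : L[X]) ^ Fintype.card L - X = X * ((X ^ (Q - 1)) ^ k - 1) := by
      rw [mul_sub, mul_one, ← pow_mul, ← hk, ← pow_succ', e2]
    rw [h1, h2]
    exact mul_dvd_mul_left X (sub_one_dvd_pow_sub_one _ k)
  have hsplitsbig : Splits ((X : L[X]) ^ Fintype.card L - X) := by
    rw [splits_iff_card_roots, FiniteField.roots_X_pow_card_sub_X,
      FiniteField.X_pow_card_sub_X_natDegree_eq L hN1]
    simp
  have hsplits : Splits f :=
    Splits.of_dvd hsplitsbig (FiniteField.X_pow_card_sub_X_ne_zero L hN1) hdvd2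
  have hcardroots : Multiset.card f.roots = Q := by
    rw [splits_iff_card_roots] at hsplits; rw [hsplits, hdeg]
  have hnodup : f.roots.Nodup := nodup_roots hsep
  have hset : ∀ x : L, x ^ Q = x ↔ x ∈ f.roots.toFinset := by
    intro x
    rw [Multiset.mem_toFinset, mem_roots hfne, IsRoot.def]
    simp [hf, sub_eq_zero]
  rw [Nat.card_eq_fintype_card, Fintype.card_congr (Equiv.subtypeEquivRight hset),
    Fintype.card_coe, Multiset.toFinset_card_of_nodup hnodup, hcardroots]

/-- The fixed subfield of `x ↦ x ^ Q`. -/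
noncomputable def fixedSubfield (Fq Fqtl : Type) [Field Fq] [Fintype Fq] [Field Fqtl]
    [Algebra Fq Fqtl] (Q : ℕ) (hQ : ∃ p n : ℕ, p.Prime ∧ CharP Fqtl p ∧ Q = p ^ n ∧
      ∀ c : Fq, c ^ Q = c) :
    IntermediateField Fq Fqtl where
  carrier := {x | x ^ Q = x}
  mul_mem' := by intro a b ha hb; simp only [Set.mem_setOf_eq] at *; rw [mul_pow, ha, hb]
  one_mem' := by simp
  add_mem' := by
    intro a b ha hb
    obtain ⟨p, n, hp, hchar, rfl, -⟩ := hQ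
    haveI : Fact p.Prime := ⟨hp⟩
    simp only [Set.mem_setOf_eq] at *
    rw [add_pow_char_pow, ha, hb]
  zero_mem' := by
    obtain ⟨p, n, hp, -, rfl, -⟩ := hQ
    simp [zero_pow (pow_ne_zero n hp.ne_zero)]
  algebraMap_mem' := by
    intro c
    obtain ⟨-, -, -, -, -, h⟩ := hQ
    simp only [Set.mem_setOf_eq, ← map_pow, h]
  inv_mem' := by
    intro x hx
    simp only [SetLike.mem_coe, Set.mem_setOf_eq] at *
    rw [inv_pow, hx]

lemma range_fin_append {α : Type*} {m n : ℕ} (f : Fin m → α) (g : Fin n → α) :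
    Set.range (Fin.append f g) = Set.range f ∪ Set.range g := by
  ext y
  constructor
  · rintro ⟨j, rfl⟩
    refine Fin.addCases (fun i => ?_) (fun i => ?_) j
    · left; exact ⟨i, (Fin.append_left f g i).symm⟩
    · right; exact ⟨i, (Fin.append_right f g i).symm⟩
  · rintro (⟨i, rfl⟩ | ⟨i, rfl⟩)
    · exact ⟨Fin.castAdd n i, Fin.append_left f g i⟩
    · exact ⟨Fin.natAdd m i, Fin.append_right f g i⟩

lemma span_range_mul (Fq Fqtl : Type) [Field Fq] [Field Fqtl] [Algebra Fq Fqtl]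
    {n : ℕ} (a : Fqtl) (v : Fin n → Fqtl) :
    Submodule.span Fq (Set.range fun j => a * v j) =
      (Submodule.span Fq (Set.range v)).map (LinearMap.mulLeft Fq a) := by
  rw [Submodule.map_span, ← Set.range_comp]
  rfl

lemma finrank_map_mul (Fq Fqtl : Type) [Field Fq] [Field Fqtl] [Algebra Fq Fqtl]
    (a : Fqtl) (ha : a ≠ 0) (S : Submodule Fq Fqtl) :
    finrank Fq (S.map (LinearMap.mulLeft Fq a)) = finrank Fq S :=
  (LinearEquiv.finrank_eq (Submodule.equivMapOfInjective _
    (fun x y h => by simpa using mul_left_cancel₀ ha h) S)).symm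

/-- For positive integers `t, g, e, ℓ` with `e < t`, `ge ≤ ℓt`, `t ∣ ge`
and `e ∤ tℓ`, there is a non-degenerate `F_{q^{tℓ}}`-linear rank metric code
`C ⊆ F_{q^{tℓ}}^{e+ge}` of dimension `2` all of whose nonzero codewords have rank weight
`e`, `ge` or `e + ge`; in particular `C` is `e`-divisible although `e ∤ tℓ`. -/
theorem stmt_17 (Fq Fqtl : Type) [Field Fq] [Fintype Fq] [Field Fqtl] [Algebra Fq Fqtl]
    (t g e ℓ : ℕ) (ht : 0 < t) (hg : 0 < g) (he : 0 < e) (hℓ : 0 < ℓ)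
    (hdeg : Module.finrank Fq Fqtl = t * ℓ)
    (het : e < t) (hge : g * e ≤ ℓ * t) (htge : t ∣ g * e) (hnd : ¬ e ∣ t * ℓ) :
    ∃ C : Submodule Fqtl (Fin (e + g * e) → Fqtl),
      Module.finrank Fqtl C = 2 ∧
      (∃ G : Matrix (Fin 2) (Fin (e + g * e)) Fqtl,
        C = Submodule.span Fqtl (Set.range fun i => G i) ∧
        LinearIndependent Fq (fun j : Fin (e + g * e) => (fun i => G i j : Fin 2 → Fqtl))) ∧
      (∀ c ∈ C, c ≠ 0 →
        Module.finrank Fq (Submodule.span Fq (Set.range c)) ∈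
          ({e, g * e, e + g * e} : Set ℕ)) ∧
      (∀ c ∈ C, e ∣ Module.finrank Fq (Submodule.span Fq (Set.range c))) := by
  classical
  have htl : 0 < t * ℓ := Nat.mul_pos ht hℓ
  haveI : FiniteDimensional Fq Fqtl := FiniteDimensional.of_finrank_pos (hdeg ▸ htl)
  haveI : Fintype Fqtl := Module.fintypeOfFintype (Module.finBasis Fq Fqtl)
  set q := Fintype.card Fq with hqdef
  have hq1 : 1 < q := Fintype.one_lt_card
  have hcard : Fintype.card Fqtl = q ^ (t * ℓ) := by
    rw [card_eq_pow_finrank (K := Fq), hdeg]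
  -- characteristic
  set p := ringChar Fq with hpdef
  obtain ⟨s, hp, hq⟩ := FiniteField.card Fq p
  haveI : CharP Fqtl p := charP_of_injective_algebraMap (algebraMap Fq Fqtl).injective p
  set Q := q ^ t with hQdef
  have hQ1 : 1 < Q := Nat.one_lt_pow ht.ne' hq1
  have hq' : q = p ^ (s : ℕ) := hq
  have hQdecomp : Q = p ^ ((s : ℕ) * t) := by rw [hQdef, hq', ← pow_mul]
  have hfix : ∀ c : Fq, c ^ Q = c := fun c => FiniteField.pow_card_pow t c
  -- the subfield with q^t elements
  set K := fixedSubfield Fq Fqtl Q ⟨p, (s : ℕ) * t, hp, inferInstance, hQdecomp, hfix⟩ with hKdef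
  have hKmem : ∀ x : Fqtl, x ∈ K ↔ x ^ Q = x := fun _ => Iff.rfl
  haveI : Fintype K := Fintype.ofFinite K
  have hKcard : Fintype.card K = Q := by
    have h0 : ((Q : ℕ) : Fqtl) = 0 := by
      rw [hQdef]
      push_cast
      rw [show ((q : ℕ) : Fqtl) = algebraMap Fq Fqtl (q : Fq) by push_cast; simp,
        Nat.cast_card_eq_zero, map_zero, zero_pow ht.ne']
    have hdvd : Q - 1 ∣ Fintype.card Fqtl - 1 := by
      rw [hcard, hQdef]
      simpa only [one_pow, pow_mul] using Nat.sub_dvd_pow_sub_pow (q ^ t) 1 ℓ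
    have := card_pow_fixed Fqtl Q hQ1 h0 hdvd
    rw [← Nat.card_eq_fintype_card]
    exact (Nat.card_congr (Equiv.subtypeEquivRight hKmem)).trans this
  haveI : FiniteDimensional Fq K := FiniteDimensional.left Fq K Fqtl
  haveI : FiniteDimensional K Fqtl := FiniteDimensional.right Fq K Fqtl
  have hKrank : finrank Fq K = t := by
    have h := card_eq_pow_finrank (K := Fq) (V := K)
    rw [hKcard, hQdef] at h
    exact (Nat.pow_right_injective hq1 h).symm
  have hLrank : finrank K Fqtl = ℓ := by
    have h := card_eq_pow_finrank (K := K) (V := Fqtl)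
    rw [hKcard, hcard, hQdef, ← pow_mul] at h
    have := Nat.pow_right_injective hq1 h
    exact (Nat.eq_of_mul_eq_mul_left ht this).symm
  -- the `u` family : Fq-independent, inside K, of size e
  set bK := Module.finBasis Fq K with hbKdef
  have heK : e ≤ finrank Fq K := hKrank ▸ het.le
  set u : Fin e → Fqtl := fun j => (bK (Fin.castLE heK j) : Fqtl) with hudef
  have hu_mem : ∀ j, u j ∈ K := fun j => (bK (Fin.castLE heK j)).2
  have hKval_inj : Function.Injective (K.val.toLinearMap : K →ₗ[Fq] Fqtl) :=
    K.val.toRingHom.injective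
  have hu_li : LinearIndependent Fq u := by
    have h1 : LinearIndependent Fq (fun j : Fin e => bK (Fin.castLE heK j)) :=
      bK.linearIndependent.comp _ (Fin.castLE_injective heK)
    exact h1.map' K.val.toLinearMap (LinearMap.ker_eq_bot.mpr hKval_inj)
  -- the `w` family : Fq-independent, spanning an Fq-subspace W of dimension g*e
  -- that is stable under multiplication by K
  set m := g * e / t with hmdef
  have hmt : t * m = g * e := Nat.mul_div_cancel' htge
  have hmℓ : m ≤ ℓ :=
    Nat.le_of_mul_le_mul_left (hmt ▸ (hge.trans_eq (Nat.mul_comm ℓ t))) ht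
  set bL := Module.finBasis K Fqtl with hbLdef
  have hmL : m ≤ finrank K Fqtl := hLrank ▸ hmℓ
  set w' : Fin m → Fqtl := fun j => bL (Fin.castLE hmL j) with hw'def
  have hw'_li : LinearIndependent K w' :=
    bL.linearIndependent.comp _ (Fin.castLE_injective hmL)
  set WK : Submodule K Fqtl := Submodule.span K (Set.range w') with hWKdef
  have hWKrank : finrank K WK = m := by
    rw [finrank_span_eq_card hw'_li, Fintype.card_fin]
  set W : Submodule Fq Fqtl := WK.restrictScalars Fq with hWdef
  have hWrank : finrank Fq W = g * e := by
    have h := Module.finrank_mul_finrank Fq K WK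
    rw [hKrank, hWKrank] at h
    rw [← hmt]
    exact h.symm
  have hW_smulK : ∀ z ∈ K, ∀ y ∈ W, z * y ∈ W := by
    intro z hz y hy
    have : (⟨z, hz⟩ : K) • y ∈ WK := WK.smul_mem _ hy
    exact (by simpa [Algebra.smul_def] using this : z * y ∈ WK)
  -- the submodule U
  set U : Submodule Fq Fqtl := Submodule.span Fq (Set.range u) with hUdef
  have hUrank : finrank Fq U = e := by
    rw [hUdef, finrank_span_eq_card hu_li, Fintype.card_fin]
  have hU_memK : ∀ x ∈ U, x ∈ K := by
    intro x hx
    refine Submodule.span_induction (fun y hy => ?_) (zero_mem K) (fun y z _ _ hy hz => add_mem hy hz)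
      (fun cc y _ hy => ?_) hx
    · obtain ⟨j, rfl⟩ := hy; exact hu_mem j
    · rw [Algebra.smul_def]; exact mul_mem (K.algebraMap_mem cc) hy
  -- the `w` family
  set bW := Module.finBasis Fq W with hbWdef
  set w : Fin (g * e) → Fqtl := fun j => ((bW (finCongr hWrank.symm j)) : Fqtl) with hwdef
  have hw_li : LinearIndependent Fq w := by
    have h1 : LinearIndependent Fq (fun j : Fin (g * e) => bW (finCongr hWrank.symm j)) :=
      bW.linearIndependent.comp _ (finCongr hWrank.symm).injective
    exact h1.map' W.subtype (Submodule.ker_subtype W)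
  have hw_mem : ∀ j, w j ∈ W := fun j => (bW (finCongr hWrank.symm j)).2
  have hWspan : Submodule.span Fq (Set.range w) = W := by
    have h1 : Set.range w = W.subtype '' Set.range (fun j => bW (finCongr hWrank.symm j)) := by
      rw [← Set.range_comp]; rfl
    have h2 : Set.range (fun j => bW (finCongr hWrank.symm j)) = Set.range bW :=
      Function.Surjective.range_comp (finCongr hWrank.symm).surjective bW
    rw [h1, ← Submodule.map_span, h2, bW.span_eq, Submodule.map_subtype_top]
  have hge0 : 0 < g * e := Nat.mul_pos hg he
  have hu0 : u ⟨0, he⟩ ≠ 0 := by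
    simp only [hudef]
    exact fun h => bK.ne_zero _ (by exact_mod_cast Subtype.ext h)
  have hw0 : w ⟨0, hge0⟩ ≠ 0 := by
    simp only [hwdef]
    exact fun h => bW.ne_zero _ (by exact_mod_cast Subtype.ext h)
  -- the rows and the generator matrix
  set r1 : Fin (e + g * e) → Fqtl := Fin.append u 0 with hr1
  set r2 : Fin (e + g * e) → Fqtl := Fin.append 0 w with hr2
  set G : Matrix (Fin 2) (Fin (e + g * e)) Fqtl := ![r1, r2] with hGdef
  -- span of the entries of a codeword
  have hcw : ∀ a b : Fqtl, Submodule.span Fq (Set.range (a • r1 + b • r2)) =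
      U.map (LinearMap.mulLeft Fq a) ⊔ W.map (LinearMap.mulLeft Fq b) := by
    intro a b
    have hfe : (a • r1 + b • r2) = Fin.append (fun j => a * u j) (fun j => b * w j) := by
      funext j
      refine Fin.addCases (fun i => ?_) (fun i => ?_) j
      · simp [hr1, hr2, Fin.append_left]
      · simp [hr1, hr2, Fin.append_right]
    rw [hfe, range_fin_append, Submodule.span_union, span_range_mul Fq Fqtl,
      span_range_mul Fq Fqtl, hWspan, hUdef]
  have hrkU : ∀ a : Fqtl, a ≠ 0 → finrank Fq (U.map (LinearMap.mulLeft Fq a)) = e := by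
    intro a ha; rw [finrank_map_mul Fq Fqtl a ha, hUrank]
  have hrkW : ∀ b : Fqtl, b ≠ 0 → finrank Fq (W.map (LinearMap.mulLeft Fq b)) = g * e := by
    intro b hb; rw [finrank_map_mul Fq Fqtl b hb, hWrank]
  -- weights of codewords
  have hweight : ∀ a b : Fqtl, ¬(a = 0 ∧ b = 0) →
      finrank Fq (Submodule.span Fq (Set.range (a • r1 + b • r2))) ∈
        ({e, g * e, e + g * e} : Set ℕ) := by
    intro a b hab
    rw [hcw a b]
    rcases eq_or_ne a 0 with ha | ha
    · rcases eq_or_ne b 0 with hb | hb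
      · exact absurd ⟨ha, hb⟩ hab
      · subst ha
        rw [LinearMap.mulLeft_zero_eq_zero, Submodule.map_zero, bot_sup_eq]
        right; left; exact hrkW b hb
    · rcases eq_or_ne b 0 with hb | hb
      · subst hb
        rw [LinearMap.mulLeft_zero_eq_zero, Submodule.map_zero, sup_bot_eq]
        left; exact hrkU a ha
      · by_cases hsub : U.map (LinearMap.mulLeft Fq a) ≤ W.map (LinearMap.mulLeft Fq b)
        · rw [sup_eq_right.mpr hsub]
          right; left; exact hrkW b hb
        · have hinf : U.map (LinearMap.mulLeft Fq a) ⊓ W.map (LinearMap.mulLeft Fq b) = ⊥ := by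
            rw [eq_bot_iff]
            rintro y ⟨hyA, hyB⟩
            obtain ⟨x, hxU, rfl⟩ := hyA
            obtain ⟨z, hzW, hz⟩ := hyB
            simp only [LinearMap.mulLeft_apply] at hz ⊢
            rcases eq_or_ne (a * x) 0 with h0 | h0
            · simpa [Submodule.mem_bot] using h0
            · exfalso
              have hx0 : x ≠ 0 := fun h => h0 (by rw [h, mul_zero])
              apply hsub
              rintro y' ⟨x', hx'U, rfl⟩
              simp only [LinearMap.mulLeft_apply]
              refine ⟨(x⁻¹ * x') * z, ?_, ?_⟩
              · exact hW_smulK _ (mul_mem (inv_mem (hU_memK x hxU)) (hU_memK x' hx'U)) z hzW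
              · calc b * (x⁻¹ * x' * z) = (x⁻¹ * x') * (b * z) := by ring
                  _ = (x⁻¹ * x') * (a * x) := by rw [hz]
                  _ = a * x' * (x⁻¹ * x) := by ring
                  _ = a * x' := by rw [inv_mul_cancel₀ hx0, mul_one]
          have hsum := Submodule.finrank_sup_add_finrank_inf_eq
            (U.map (LinearMap.mulLeft Fq a)) (W.map (LinearMap.mulLeft Fq b))
          rw [hinf, finrank_bot, add_zero, hrkU a ha, hrkW b hb] at hsum
          right; right; exact hsum
  -- assemble
  refine ⟨Submodule.span Fqtl (Set.range fun i => G i), ?_, ⟨G, rfl, ?_⟩, ?_, ?_⟩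
  · -- dimension 2
    have hli2 : LinearIndependent Fqtl (fun i => G i) := by
      rw [Fintype.linearIndependent_iff]
      intro φ h i
      rw [Fin.sum_univ_two] at h
      have h0 := congrFun h (Fin.castAdd (g * e) ⟨0, he⟩)
      have h1 := congrFun h (Fin.natAdd e ⟨0, hge0⟩)
      simp only [hGdef, Matrix.cons_val_zero, Matrix.cons_val_one, Matrix.head_cons,
        Pi.add_apply, Pi.smul_apply, smul_eq_mul, hr1, hr2, Fin.append_left, Fin.append_right,
        Pi.zero_apply, mul_zero, add_zero, zero_add, Pi.ofNat_apply] at h0 h1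
      have hφ0 : φ 0 = 0 := by
        rcases mul_eq_zero.mp h0 with h' | h'
        · exact h'
        · exact absurd h' hu0
      have hφ1 : φ 1 = 0 := by
        rcases mul_eq_zero.mp h1 with h' | h'
        · exact h'
        · exact absurd h' hw0
      fin_cases i
      · exact hφ0
      · exact hφ1
    rw [finrank_span_eq_card hli2, Fintype.card_fin]
  · -- non-degeneracy: the columns are Fq-linearly independent
    rw [Fintype.linearIndependent_iff]
    intro φ h j
    have h0 := congrFun h 0
    have h1 := congrFun h 1
    rw [Finset.sum_apply] at h0 h1
    simp only [hGdef, Pi.smul_apply, Matrix.cons_val_zero, Matrix.cons_val_one,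
      Matrix.head_cons, hr1, hr2] at h0 h1
    rw [Fin.sum_univ_add] at h0 h1
    simp only [Fin.append_left, Fin.append_right, Pi.zero_apply, smul_zero,
      Finset.sum_const_zero, add_zero, zero_add, Pi.ofNat_apply] at h0 h1
    have hL : ∀ i : Fin e, φ (Fin.castAdd (g * e) i) = 0 :=
      Fintype.linearIndependent_iff.mp hu_li _ h0
    have hR : ∀ i : Fin (g * e), φ (Fin.natAdd e i) = 0 :=
      Fintype.linearIndependent_iff.mp hw_li _ h1
    exact Fin.addCases hL hR j
  · -- weights of nonzero codewords
    intro c hc hc0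
    rw [Submodule.mem_span_range_iff_exists_fun] at hc
    obtain ⟨coef, hcoef⟩ := hc
    rw [Fin.sum_univ_two] at hcoef
    simp only [hGdef, Matrix.cons_val_zero, Matrix.cons_val_one, Matrix.head_cons] at hcoef
    have hab : ¬(coef 0 = 0 ∧ coef 1 = 0) := by
      rintro ⟨h0', h1'⟩
      apply hc0
      rw [← hcoef, h0', h1', zero_smul, zero_smul, add_zero]
    rw [← hcoef]
    exact hweight _ _ hab
  · -- e-divisibility
    intro c hc
    rcases eq_or_ne c 0 with rfl | hc0
    · have h1 : Set.range (0 : Fin (e + g * e) → Fqtl) ⊆ {0} := by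
        rintro - ⟨j, rfl⟩; rfl
      have h2 : Submodule.span Fq (Set.range (0 : Fin (e + g * e) → Fqtl)) ≤ ⊥ := by
        rw [← Submodule.span_zero_singleton Fq]
        exact Submodule.span_mono h1
      rw [le_bot_iff.mp h2, finrank_bot]
      exact dvd_zero e
    · have hmem : finrank Fq (Submodule.span Fq (Set.range c)) ∈
          ({e, g * e, e + g * e} : Set ℕ) := by
        -- reuse the previous argument
        rw [Submodule.mem_span_range_iff_exists_fun] at hc
        obtain ⟨coef, hcoef⟩ := hc
        rw [Fin.sum_univ_two] at hcoef
        simp only [hGdef, Matrix.cons_val_zero, Matrix.cons_val_one, Matrix.head_cons] at hcoef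
        have hab : ¬(coef 0 = 0 ∧ coef 1 = 0) := by
          rintro ⟨h0', h1'⟩
          apply hc0
          rw [← hcoef, h0', h1', zero_smul, zero_smul, add_zero]
        rw [← hcoef]
        exact hweight _ _ hab
      rcases hmem with h | h | h
      · rw [h]
      · rw [h]; exact ⟨g, mul_comm g e⟩
      · rw [h]; exact Nat.dvd_add dvd_rfl ⟨g, mul_comm g e⟩
end

section
/- Let q be a prime power, m, k, e positive integers, let V be a k-dimensional F_{q^m}-vector space, and let W be an F_q-subspace of V such that for every nonzero w ∈ V the dimension dim_{F_q}(W ∩ span_{F_{q^m}}{w}) is divisible by e. Then dim_{F_q}(W) is divisible by e. -/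
open scoped LinearAlgebra.Projectivization
open Projectivization

lemma aux_pow_sub_one_dvd {q : ℕ} (hq : 2 ≤ q) {e : ℕ} (he : 0 < e) :
    ∀ n, q ^ e - 1 ∣ q ^ n - 1 → e ∣ n := by
  intro n
  induction n using Nat.strong_induction_on with
  | _ n ih =>
    intro h
    rcases lt_or_ge n e with hne | hen
    · have h0 : 0 < q ^ n := Nat.pow_pos (n := n) (by omega)
      have h1 : q ^ n - 1 < q ^ e - 1 := by
        have := Nat.pow_lt_pow_right (by omega : 1 < q) hne
        omega
      have h2 : q ^ n - 1 = 0 := Nat.eq_zero_of_dvd_of_lt h h1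
      have h3 : q ^ n = 1 := by omega
      have h4 : n = 0 := by
        by_contra hn
        have := one_lt_pow' (by omega : 1 < q) hn
        omega
      simp [h4]
    · have h1 : q ^ (n - e) * q ^ e = q ^ n := by
        rw [← pow_add]; congr 1; omega
      have h2 : 1 ≤ q ^ e := Nat.one_le_pow _ _ (by omega)
      have h3 : q ^ (n - e) ≤ q ^ n := Nat.pow_le_pow_right (by omega) (by omega)
      have h4 : 1 ≤ q ^ (n - e) := Nat.one_le_pow _ _ (by omega)
      have key : q ^ (n - e) - 1 = (q ^ n - 1) - q ^ (n - e) * (q ^ e - 1) := by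
        rw [Nat.mul_sub, h1, mul_one]
        omega
      have hdvd : q ^ e - 1 ∣ q ^ (n - e) - 1 := by
        rw [key]; exact Nat.dvd_sub h (dvd_mul_left _ _)
      obtain ⟨c, hc⟩ := ih (n - e) (by omega) hdvd
      exact ⟨c + 1, by rw [Nat.mul_add, mul_one]; omega⟩

/-- Let `V` be a `k`-dimensional `F_{q^m}`-vector space and `W` an
`F_q`-subspace of `V` such that `dim_{F_q}(W ∩ ⟨w⟩_{F_{q^m}})` is divisible by `e` for
every nonzero `w ∈ V`. Then `dim_{F_q} W` is divisible by `e`. -/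
theorem stmt_18 (Fq Fqm V : Type) [Field Fq] [Fintype Fq] [Field Fqm] [Algebra Fq Fqm]
    [AddCommGroup V] [Module Fqm V] [Module Fq V] [IsScalarTower Fq Fqm V]
    (m k e : ℕ) (hm : 0 < m) (hk : 0 < k) (he : 0 < e)
    (hdeg : Module.finrank Fq Fqm = m)
    [FiniteDimensional Fqm V] (hV : Module.finrank Fqm V = k)
    (W : Submodule Fq V)
    (hW : ∀ w : V, w ≠ 0 →
      e ∣ Module.finrank Fq ↥(W ⊓ (Submodule.span Fqm {w}).restrictScalars Fq)) :
    e ∣ Module.finrank Fq W := by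
  classical
  haveI hfd : FiniteDimensional Fq Fqm :=
    FiniteDimensional.of_finrank_pos (by rw [hdeg]; exact hm)
  haveI : FiniteDimensional Fq V := FiniteDimensional.trans Fq Fqm V
  haveI : Finite V := Module.finite_of_finite Fq
  haveI : Fintype V := Fintype.ofFinite V
  haveI : Finite (ℙ Fqm V) := Quotient.finite _
  haveI : Fintype (ℙ Fqm V) := Fintype.ofFinite _
  set q := Fintype.card Fq with hqdef
  have hq : 2 ≤ q := Fintype.one_lt_card
  -- the submodule attached to a projective point
  set U : ℙ Fqm V → Submodule Fq V :=
    fun P => W ⊓ (Submodule.span Fqm {P.rep}).restrictScalars Fq with hU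
  -- map from nonzero vectors of W to projective space
  let f : {v : ↥W // v ≠ 0} → ℙ Fqm V :=
    fun v => Projectivization.mk Fqm (v.1 : V) (fun h => v.2 (Subtype.ext h))
  -- membership characterization of fibers
  have hmem : ∀ (P : ℙ Fqm V) (x : V) (hx : x ≠ 0),
      Projectivization.mk Fqm x hx = P ↔ x ∈ Submodule.span Fqm {P.rep} := by
    intro P x hx
    conv_lhs => rw [← P.mk_rep]
    rw [Projectivization.mk_eq_mk_iff']
    simp [Submodule.mem_span_singleton]
  -- fiber cardinality
  have hfiber : ∀ P : ℙ Fqm V,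
      Fintype.card {v : {v : ↥W // v ≠ 0} // f v = P}
        = Fintype.card (↥(U P)) - 1 := by
    intro P
    have hequiv : {v : {v : ↥W // v ≠ 0} // f v = P} ≃ {x : ↥(U P) // x ≠ 0} :=
      { toFun := fun v => ⟨⟨(v.1.1 : V), v.1.1.2, (hmem P _ _).mp v.2⟩, by
          intro h
          have h2 := congrArg Subtype.val h
          exact v.1.2 (Subtype.val_injective h2)⟩
        invFun := fun x => ⟨⟨⟨(x.1 : V), x.1.2.1⟩, by
          intro h
          have h2 := congrArg Subtype.val h
          exact x.2 (Subtype.val_injective h2)⟩,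
          (hmem P _ _).mpr x.1.2.2⟩
        left_inv := fun _ => rfl
        right_inv := fun _ => rfl }
    rw [Fintype.card_congr hequiv]
    rw [Fintype.card_subtype_compl (fun x : ↥(U P) => x = 0), Fintype.card_subtype_eq]
  -- total count
  have htot : Fintype.card {v : ↥W // v ≠ 0} = Fintype.card ↥W - 1 := by
    rw [Fintype.card_subtype_compl (fun x : ↥W => x = 0), Fintype.card_subtype_eq]
  have hsum : ∑ P : ℙ Fqm V, Fintype.card {v : {v : ↥W // v ≠ 0} // f v = P}
      = Fintype.card {v : ↥W // v ≠ 0} := by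
    calc ∑ P : ℙ Fqm V, Fintype.card {v : {v : ↥W // v ≠ 0} // f v = P}
        = ∑ P : ℙ Fqm V, ∑ _a : {v : {v : ↥W // v ≠ 0} // f v = P}, 1 := by
          simp only [Finset.sum_const, Finset.card_univ, smul_eq_mul, mul_one]
      _ = ∑ _a : {v : ↥W // v ≠ 0}, 1 := Fintype.sum_fiberwise f fun _ => 1
      _ = Fintype.card {v : ↥W // v ≠ 0} := by
          simp only [Finset.sum_const, Finset.card_univ, smul_eq_mul, mul_one]
  -- card formulas
  have hcardW : Fintype.card ↥W = q ^ Module.finrank Fq ↥W := Module.card_eq_pow_finrank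
  have hcardU : ∀ P : ℙ Fqm V,
      Fintype.card ↥(U P) = q ^ Module.finrank Fq ↥(U P) := fun P => Module.card_eq_pow_finrank
  -- each fiber count is divisible by q^e - 1
  have hdvd : (q ^ e - 1) ∣ q ^ Module.finrank Fq ↥W - 1 := by
    have h1 : q ^ Module.finrank Fq ↥W - 1
        = ∑ P : ℙ Fqm V, (q ^ Module.finrank Fq ↥(U P) - 1) := by
      rw [← hcardW, ← htot, ← hsum]
      refine Finset.sum_congr rfl fun P _ => ?_
      rw [hfiber P, hcardU P]
    rw [h1]
    refine Finset.dvd_sum fun P _ => ?_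
    obtain ⟨c, hc⟩ := hW P.rep P.rep_nonzero
    rw [hc]
    exact Nat.pow_sub_one_dvd_pow_sub_one q (dvd_mul_right e c)
  exact aux_pow_sub_one_dvd hq he _ hdvd
end

section
/- Let q be a prime power, m, ℓ, e positive integers with e dividing m, and let U be an F_q-subspace of F_{q^m}^{ℓ+1} with dim_{F_q}(U) = ℓm. Suppose that dim_{F_q}(U ∩ H) is divisible by e for every F_{q^m}-hyperplane H of F_{q^m}^{ℓ+1} (i.e., every F_{q^m}-subspace of F_{q^m}-dimension ℓ). Then dim_{F_q}(U ∩ span_{F_{q^m}}{w}) is divisible by e for every nonzero w ∈ F_{q^m}^{ℓ+1}. -/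
open Module Finset

private lemma aux_sub_one_dvd {q : ℤ} {e k : ℕ} (h : e ∣ k) : q ^ e - 1 ∣ q ^ k - 1 := by
  obtain ⟨c, rfl⟩ := h
  rw [pow_mul]
  simpa using sub_dvd_pow_sub_pow (q ^ e) 1 c

private lemma aux_geom {A c : ℤ} (h : c ∣ A - 1) (k : ℕ) :
    c * (A - 1) ∣ A ^ k - 1 - (k : ℤ) * (A - 1) := by
  induction k with
  | zero => simp
  | succ k ih =>
    have h1 : c * (A - 1) ∣ (A ^ k - 1) * (A - 1) :=
      mul_dvd_mul (h.trans (by simpa using sub_dvd_pow_sub_pow A 1 k)) dvd_rfl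
    have h2 : A ^ (k + 1) - 1 - ((k : ℤ) + 1) * (A - 1)
        = (A ^ k - 1 - (k : ℤ) * (A - 1)) + (A ^ k - 1) * (A - 1) := by ring
    push_cast
    rw [h2]
    exact dvd_add ih h1

private lemma aux_e_dvd {q e d : ℕ} (hq : 2 ≤ q) (he : 0 < e)
    (h : q ^ e - 1 ∣ q ^ d - 1) : e ∣ d := by
  have hr : d % e < e := Nat.mod_lt _ he
  have hd : q ^ d = q ^ (e * (d / e)) * q ^ (d % e) := by
    rw [← pow_add, Nat.div_add_mod]
  have h1 : q ^ e - 1 ∣ q ^ d - q ^ (d % e) := by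
    rw [hd]
    have h2 : q ^ e - 1 ∣ q ^ (e * (d / e)) - 1 := by
      rw [pow_mul]; simpa using Nat.sub_dvd_pow_sub_pow (q ^ e) 1 (d / e)
    calc q ^ e - 1 ∣ (q ^ (e * (d / e)) - 1) * q ^ (d % e) := h2.mul_right _
      _ = q ^ (e * (d / e)) * q ^ (d % e) - q ^ (d % e) := by rw [Nat.sub_mul, one_mul]
  have hle : q ^ (d % e) ≤ q ^ d := Nat.pow_le_pow_right (by omega) (Nat.mod_le d e)
  have h1q : 1 ≤ q ^ (d % e) := Nat.one_le_pow _ _ (by omega)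
  have h1d : 1 ≤ q ^ d := Nat.one_le_pow _ _ (by omega)
  have h2 : q ^ e - 1 ∣ q ^ (d % e) - 1 := by
    have h3 := Nat.dvd_sub h h1
    have heq : q ^ d - 1 - (q ^ d - q ^ (d % e)) = q ^ (d % e) - 1 := by omega
    rwa [heq] at h3
  have hlt : q ^ (d % e) - 1 < q ^ e - 1 := by
    have := Nat.pow_lt_pow_right (by omega : 1 < q) hr
    omega
  have h0 : q ^ (d % e) - 1 = 0 := Nat.eq_zero_of_dvd_of_lt h2 hlt
  have : q ^ (d % e) = 1 := by omega
  have hde : d % e = 0 := by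
    by_contra hne
    have := Nat.le_self_pow hne q
    omega
  exact Nat.dvd_of_mod_eq_zero hde

set_option maxHeartbeats 1000000 in
/-- Let `e ∣ m` and let `U` be an `F_q`-subspace of `F_{q^m}^{ℓ+1}` of
dimension `ℓm` such that `dim_{F_q}(U ∩ H)` is divisible by `e` for every
`F_{q^m}`-hyperplane `H`. Then `dim_{F_q}(U ∩ ⟨w⟩_{F_{q^m}})` is divisible by `e` for
every nonzero `w ∈ F_{q^m}^{ℓ+1}`. -/
theorem stmt_19 (Fq Fqm : Type) [Field Fq] [Fintype Fq] [Field Fqm] [Algebra Fq Fqm]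
    (m ℓ e : ℕ) (hm : 0 < m) (hℓ : 0 < ℓ) (he : 0 < e)
    (hdeg : Module.finrank Fq Fqm = m)
    (hem : e ∣ m)
    (U : Submodule Fq (Fin (ℓ + 1) → Fqm))
    (hU : Module.finrank Fq U = ℓ * m)
    (hhyp : ∀ H : Submodule Fqm (Fin (ℓ + 1) → Fqm), Module.finrank Fqm H = ℓ →
      e ∣ Module.finrank Fq ↥(H.restrictScalars Fq ⊓ U)) :
    ∀ w : Fin (ℓ + 1) → Fqm, w ≠ 0 →
      e ∣ Module.finrank Fq ↥((Submodule.span Fqm {w}).restrictScalars Fq ⊓ U) := by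
  classical
  obtain ⟨n, rfl⟩ : ∃ n, ℓ = n + 1 := ⟨ℓ - 1, by omega⟩
  intro w hw
  haveI : FiniteDimensional Fq Fqm := FiniteDimensional.of_finrank_pos (by rw [hdeg]; exact hm)
  haveI : Finite Fqm := Module.finite_of_finite Fq
  haveI : Fintype Fqm := Fintype.ofFinite _
  haveI : Finite ((Fin (n + 1 + 1) → Fqm) →ₗ[Fqm] Fqm) :=
    Finite.of_injective _ (DFunLike.coe_injective)
  haveI : Fintype ((Fin (n + 1 + 1) → Fqm) →ₗ[Fqm] Fqm) := Fintype.ofFinite _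
  set q : ℕ := Fintype.card Fq with hqdef
  have hq2 : 2 ≤ q := Fintype.one_lt_card
  have hQ : Fintype.card Fqm = q ^ m := by rw [card_eq_pow_finrank (K := Fq), hdeg]
  set ev : (Fin (n + 1 + 1) → Fqm) → ((Fin (n + 1 + 1) → Fqm) →ₗ[Fqm] Fqm) →ₗ[Fqm] Fqm :=
    fun v => LinearMap.applyₗ (R := Fqm) (M₂ := Fqm) v with hevdef
  have hev : ∀ (v : Fin (n + 1 + 1) → Fqm) (φ : (Fin (n + 1 + 1) → Fqm) →ₗ[Fqm] Fqm),
      (ev v) φ = φ v := fun _ _ => rfl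
  have hdimV : finrank Fqm (Fin (n + 1 + 1) → Fqm) = n + 1 + 1 := Module.finrank_fin_fun Fqm
  have hdimD : finrank Fqm ((Fin (n + 1 + 1) → Fqm) →ₗ[Fqm] Fqm) = n + 1 + 1 := by
    have h := Subspace.dual_finrank_eq (K := Fqm) (V := Fin (n + 1 + 1) → Fqm)
    rw [hdimV] at h
    exact h
  obtain ⟨i, hi⟩ : ∃ i, w i ≠ 0 := by
    by_contra h; push_neg at h; exact hw (funext fun x => h x)
  set φ2 : (Fin (n + 1 + 1) → Fqm) →ₗ[Fqm] Fqm := (w i)⁻¹ • LinearMap.proj i with hφ2def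
  have hφ2w : φ2 w = 1 := by
    simp [hφ2def, LinearMap.proj_apply, smul_eq_mul]
    exact inv_mul_cancel₀ hi
  have hKw : finrank Fqm (LinearMap.ker (ev w)) = n + 1 := by
    have hsurj : Function.Surjective (ev w) := by
      intro x
      exact ⟨x • φ2, by rw [hev]; simp [hφ2w, smul_eq_mul]⟩
    have h := LinearMap.finrank_range_add_finrank_ker (ev w)
    rw [LinearMap.range_eq_top.mpr hsurj, finrank_top, finrank_self, hdimD] at h
    omega
  have cardSub : ∀ W : Submodule Fqm ((Fin (n + 1 + 1) → Fqm) →ₗ[Fqm] Fqm),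
      Fintype.card ↥W = (q ^ m) ^ (finrank Fqm W) := by
    intro W
    rw [card_eq_pow_finrank (K := Fqm) (V := ↥W), hQ]
  have bridge : ∀ W : Submodule Fqm (Fin (n + 1 + 1) → Fqm),
      Fintype.card {u : U // (u : Fin (n + 1 + 1) → Fqm) ∈ W}
        = Fintype.card ↥(W.restrictScalars Fq ⊓ U) := by
    intro W
    refine Fintype.card_congr ⟨fun x => ⟨x.1.1, Submodule.mem_inf.mpr ⟨x.2, x.1.2⟩⟩,
      fun y => ⟨⟨y.1, (Submodule.mem_inf.mp y.2).2⟩, (Submodule.mem_inf.mp y.2).1⟩,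
      fun x => by ext; rfl, fun y => by ext; rfl⟩
  have hPmem : ∀ u : Fin (n + 1 + 1) → Fqm, u ∈ Submodule.span Fqm {w} →
      Fintype.card {φ : (Fin (n + 1 + 1) → Fqm) →ₗ[Fqm] Fqm // φ w = 0 ∧ φ u = 0}
        = (q ^ m) ^ (n + 1) := by
    intro u hu
    have hle : LinearMap.ker (ev w) ≤ LinearMap.ker (ev u) := by
      intro φ hφ
      obtain ⟨c, rfl⟩ := Submodule.mem_span_singleton.mp hu
      rw [LinearMap.mem_ker] at hφ ⊢
      rw [hev] at hφ ⊢
      rw [map_smul, hφ, smul_zero]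
    have hcong : Fintype.card {φ : (Fin (n + 1 + 1) → Fqm) →ₗ[Fqm] Fqm // φ w = 0 ∧ φ u = 0}
        = Fintype.card ↥(LinearMap.ker (ev w)) := by
      refine Fintype.card_congr (Equiv.subtypeEquivRight ?_)
      intro φ
      constructor
      · rintro ⟨h1, _⟩
        exact LinearMap.mem_ker.mpr (by rw [hev]; exact h1)
      · intro hφ
        refine ⟨by rw [← hev w φ]; exact LinearMap.mem_ker.mp hφ, ?_⟩
        rw [← hev u φ]
        exact LinearMap.mem_ker.mp (hle hφ)
    rw [hcong, cardSub, hKw]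
  have hPnot : ∀ u : Fin (n + 1 + 1) → Fqm, u ∉ Submodule.span Fqm {w} →
      Fintype.card {φ : (Fin (n + 1 + 1) → Fqm) →ₗ[Fqm] Fqm // φ w = 0 ∧ φ u = 0}
        = (q ^ m) ^ n := by
    intro u hu
    have hmk : (Submodule.Quotient.mk u :
        (Fin (n + 1 + 1) → Fqm) ⧸ Submodule.span Fqm {w}) ≠ 0 := by
      simpa [Submodule.Quotient.mk_eq_zero] using hu
    obtain ⟨ψ, hψ⟩ : ∃ ψ : Module.Dual Fqm ((Fin (n + 1 + 1) → Fqm) ⧸ Submodule.span Fqm {w}),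
        ψ (Submodule.Quotient.mk u) ≠ 0 := by
      by_contra hcon
      push_neg at hcon
      exact hmk ((Module.forall_dual_apply_eq_zero_iff Fqm _).mp hcon)
    set φ1' : (Fin (n + 1 + 1) → Fqm) →ₗ[Fqm] Fqm :=
      ψ.comp (Submodule.span Fqm {w}).mkQ with hφ1'def
    have hφ1'w : φ1' w = 0 := by
      have : ((Submodule.span Fqm {w}).mkQ) w = 0 :=
        (Submodule.Quotient.mk_eq_zero _).mpr (Submodule.mem_span_singleton_self w)
      simp [hφ1'def, this]
    have hφ1'u : φ1' u ≠ 0 := hψ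
    set φ1 : (Fin (n + 1 + 1) → Fqm) →ₗ[Fqm] Fqm := (φ1' u)⁻¹ • φ1' with hφ1def
    have hφ1w : φ1 w = 0 := by simp [hφ1def, hφ1'w]
    have hφ1u : φ1 u = 1 := by
      simp only [hφ1def, LinearMap.smul_apply, smul_eq_mul]
      exact inv_mul_cancel₀ hφ1'u
    have hsurj : Function.Surjective ((ev w).prod (ev u)) := by
      rintro ⟨x, y⟩
      refine ⟨x • φ2 + (y - x * φ2 u) • φ1, ?_⟩
      simp only [LinearMap.prod_apply, Function.prod, hev, LinearMap.add_apply, LinearMap.smul_apply,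
        smul_eq_mul, hφ2w, hφ1w, hφ1u, mul_one, mul_zero, add_zero]
      rw [Prod.mk.injEq]
      exact ⟨rfl, by ring⟩
    have hker : finrank Fqm (LinearMap.ker (ev w) ⊓ LinearMap.ker (ev u) :
        Submodule Fqm ((Fin (n + 1 + 1) → Fqm) →ₗ[Fqm] Fqm)) = n := by
      have h := LinearMap.finrank_range_add_finrank_ker ((ev w).prod (ev u))
      rw [LinearMap.range_eq_top.mpr hsurj, finrank_top, LinearMap.ker_prod, hdimD,
        Module.finrank_prod, finrank_self] at h
      omega
    have hcong : Fintype.card {φ : (Fin (n + 1 + 1) → Fqm) →ₗ[Fqm] Fqm // φ w = 0 ∧ φ u = 0}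
        = Fintype.card ↥(LinearMap.ker (ev w) ⊓ LinearMap.ker (ev u) :
            Submodule Fqm ((Fin (n + 1 + 1) → Fqm) →ₗ[Fqm] Fqm)) := by
      refine Fintype.card_congr (Equiv.subtypeEquivRight ?_)
      intro φ
      rw [Submodule.mem_inf, LinearMap.mem_ker, LinearMap.mem_ker, hev, hev]
    rw [hcong, cardSub, hker]
  set N : ((Fin (n + 1 + 1) → Fqm) →ₗ[Fqm] Fqm) → ℕ :=
    fun φ => Fintype.card {u : U // φ (u : Fin (n + 1 + 1) → Fqm) = 0} with hNdef
  have hcardU : Fintype.card U = q ^ ((n + 1) * m) := by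
    rw [card_eq_pow_finrank (K := Fq), hU]
  have hN0 : N 0 = q ^ ((n + 1) * m) := by
    have h1 : N 0 = Fintype.card U :=
      Fintype.card_congr (Equiv.subtypeUnivEquiv fun u => LinearMap.zero_apply _)
    rw [h1, hcardU]
  have hNne : ∀ φ : (Fin (n + 1 + 1) → Fqm) →ₗ[Fqm] Fqm, φ w = 0 → φ ≠ 0 →
      N φ = q ^ finrank Fq ↥((LinearMap.ker φ).restrictScalars Fq ⊓ U) ∧
      e ∣ finrank Fq ↥((LinearMap.ker φ).restrictScalars Fq ⊓ U) := by
    intro φ hφw hφ0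
    constructor
    · have h1 : N φ = Fintype.card {u : U // (u : Fin (n + 1 + 1) → Fqm) ∈ LinearMap.ker φ} :=
        Fintype.card_congr (Equiv.subtypeEquivRight fun u => LinearMap.mem_ker.symm)
      rw [h1, bridge, card_eq_pow_finrank (K := Fq)]
    · apply hhyp
      obtain ⟨v, hv⟩ : ∃ v, φ v ≠ 0 := by
        by_contra hcon
        push_neg at hcon
        exact hφ0 (LinearMap.ext fun v => by simp [hcon])
      have hsurj : Function.Surjective φ := by
        intro x
        refine ⟨(x * (φ v)⁻¹) • v, ?_⟩
        rw [map_smul, smul_eq_mul]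
        field_simp
      have h := LinearMap.finrank_range_add_finrank_ker φ
      rw [LinearMap.range_eq_top.mpr hsurj, finrank_top, finrank_self, hdimV] at h
      omega
  set dL : ℕ := finrank Fq ↥((Submodule.span Fqm {w}).restrictScalars Fq ⊓ U) with hdLdef
  have hcS : Fintype.card {u : U // (u : Fin (n + 1 + 1) → Fqm) ∈ Submodule.span Fqm {w}}
      = q ^ dL := by
    rw [bridge, card_eq_pow_finrank (K := Fq)]
  set F1 : Finset ((Fin (n + 1 + 1) → Fqm) →ₗ[Fqm] Fqm) :=
    univ.filter (fun φ => φ w = 0) with hF1def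
  have hswap : ∑ φ ∈ F1, N φ
      = ∑ u : U, Fintype.card {φ : (Fin (n + 1 + 1) → Fqm) →ₗ[Fqm] Fqm //
          φ w = 0 ∧ φ (u : Fin (n + 1 + 1) → Fqm) = 0} := by
    have h1 : ∀ φ : (Fin (n + 1 + 1) → Fqm) →ₗ[Fqm] Fqm,
        N φ = ∑ u : U, if φ (u : Fin (n + 1 + 1) → Fqm) = 0 then 1 else 0 := by
      intro φ
      show Fintype.card {u : U // φ (u : Fin (n + 1 + 1) → Fqm) = 0} = _
      rw [Fintype.card_subtype, Finset.card_filter]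
    calc ∑ φ ∈ F1, N φ
        = ∑ φ ∈ F1, ∑ u : U, (if φ (u : Fin (n + 1 + 1) → Fqm) = 0 then 1 else 0) :=
          Finset.sum_congr rfl fun φ _ => h1 φ
      _ = ∑ u : U, ∑ φ ∈ F1, (if φ (u : Fin (n + 1 + 1) → Fqm) = 0 then 1 else 0) :=
          Finset.sum_comm
      _ = _ := by
          refine Finset.sum_congr rfl fun u _ => ?_
          rw [← Finset.card_filter, hF1def, Finset.filter_filter, Fintype.card_subtype]
  set cN : ℕ :=
    Fintype.card {u : U // (u : Fin (n + 1 + 1) → Fqm) ∉ Submodule.span Fqm {w}} with hcNdef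
  have hcScN : q ^ dL + cN = q ^ ((n + 1) * m) := by
    rw [← hcS, ← hcardU, hcNdef, Fintype.card_subtype, Fintype.card_subtype]
    exact Finset.card_filter_add_card_filter_not _
  have hUside : ∑ u : U, Fintype.card {φ : (Fin (n + 1 + 1) → Fqm) →ₗ[Fqm] Fqm //
          φ w = 0 ∧ φ (u : Fin (n + 1 + 1) → Fqm) = 0}
      = q ^ dL * (q ^ m) ^ (n + 1) + cN * (q ^ m) ^ n := by
    calc ∑ u : U, Fintype.card {φ : (Fin (n + 1 + 1) → Fqm) →ₗ[Fqm] Fqm //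
            φ w = 0 ∧ φ (u : Fin (n + 1 + 1) → Fqm) = 0}
        = ∑ u : U, (if (u : Fin (n + 1 + 1) → Fqm) ∈ Submodule.span Fqm {w}
            then (q ^ m) ^ (n + 1) else (q ^ m) ^ n) := by
          refine Finset.sum_congr rfl fun u _ => ?_
          by_cases hu : (u : Fin (n + 1 + 1) → Fqm) ∈ Submodule.span Fqm {w}
          · rw [if_pos hu, hPmem _ hu]
          · rw [if_neg hu, hPnot _ hu]
      _ = _ := by
          rw [Finset.sum_ite, Finset.sum_const, Finset.sum_const, smul_eq_mul, smul_eq_mul,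
            ← Fintype.card_subtype, ← Fintype.card_subtype, hcS, hcNdef]
  have h0F1 : (0 : (Fin (n + 1 + 1) → Fqm) →ₗ[Fqm] Fqm) ∈ F1 := by simp [hF1def]
  set W0 := F1.erase 0 with hW0def
  have hφside : ∑ φ ∈ F1, N φ = q ^ ((n + 1) * m) + ∑ φ ∈ W0, N φ := by
    rw [← hN0, hW0def, Finset.add_sum_erase F1 N h0F1]
  have hF1card : F1.card = (q ^ m) ^ (n + 1) := by
    have hc : Fintype.card {φ : (Fin (n + 1 + 1) → Fqm) →ₗ[Fqm] Fqm // φ w = 0}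
        = Fintype.card ↥(LinearMap.ker (ev w)) := by
      refine Fintype.card_congr (Equiv.subtypeEquivRight ?_)
      intro φ
      rw [LinearMap.mem_ker, hev]
    rw [hF1def, ← Fintype.card_subtype, hc, cardSub, hKw]
  have hW0card : W0.card = (q ^ m) ^ (n + 1) - 1 := by
    rw [hW0def, Finset.card_erase_of_mem h0F1, hF1card]
  set A : ℤ := (q : ℤ) ^ m with hAdef
  set X : ℤ := (q : ℤ) ^ dL with hXdef
  set T' : ℤ := ∑ φ ∈ W0, ((N φ : ℤ) - 1) with hT'def
  set M : ℤ := ((q : ℤ) ^ e - 1) * (A - 1) with hMdef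
  have hfib : M ∣ T' := by
    rw [hT'def, ← Finset.sum_fiberwise_of_maps_to
      (g := fun φ : (Fin (n + 1 + 1) → Fqm) →ₗ[Fqm] Fqm => Submodule.span Fqm {φ})
      (t := W0.image fun φ => Submodule.span Fqm {φ})
      (fun x hx => Finset.mem_image_of_mem _ hx) (fun φ => ((N φ : ℤ) - 1))]
    refine Finset.dvd_sum ?_
    intro K hK
    obtain ⟨φ0, hφ0W, hφ0K⟩ := Finset.mem_image.mp hK
    have hφ0 : φ0 ≠ 0 ∧ φ0 w = 0 := by
      rw [hW0def, Finset.mem_erase, hF1def, Finset.mem_filter] at hφ0W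
      exact ⟨hφ0W.1, hφ0W.2.2⟩
    have hmemfib : ∀ φ ∈ W0.filter (fun φ => Submodule.span Fqm {φ} = K),
        ∃ c : Fqm, c ≠ 0 ∧ φ = c • φ0 := by
      intro φ hφ
      rw [Finset.mem_filter, hW0def, Finset.mem_erase] at hφ
      obtain ⟨⟨hne, _⟩, hsp⟩ := hφ
      have hmem : φ ∈ Submodule.span Fqm {φ0} := by
        rw [hφ0K.trans hsp.symm]
        exact Submodule.mem_span_singleton_self φ
      obtain ⟨c, hc⟩ := Submodule.mem_span_singleton.mp hmem
      exact ⟨c, fun h0 => hne (by rw [← hc, h0, zero_smul]), hc.symm⟩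
    have hNconst : ∀ φ ∈ W0.filter (fun φ => Submodule.span Fqm {φ} = K), N φ = N φ0 := by
      intro φ hφ
      obtain ⟨c, hc, rfl⟩ := hmemfib φ hφ
      refine Fintype.card_congr (Equiv.subtypeEquivRight ?_)
      intro u
      simp only [LinearMap.smul_apply, smul_eq_mul]
      constructor
      · intro h
        rcases mul_eq_zero.mp h with h' | h'
        · exact absurd h' hc
        · exact h'
      · intro h
        rw [h, mul_zero]
    have hcardfib : (W0.filter (fun φ => Submodule.span Fqm {φ} = K)).card = q ^ m - 1 := by
      have hbij : (Finset.univ.erase (0 : Fqm)).card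
          = (W0.filter (fun φ => Submodule.span Fqm {φ} = K)).card := by
        refine Finset.card_bij (fun c _ => c • φ0) ?_ ?_ ?_
        · intro c hc
          have hcne : c ≠ 0 := (Finset.mem_erase.mp hc).1
          rw [Finset.mem_filter, hW0def, Finset.mem_erase, hF1def, Finset.mem_filter]
          refine ⟨⟨?_, Finset.mem_univ _, ?_⟩, ?_⟩
          · intro h0
            rcases smul_eq_zero.mp h0 with h' | h'
            · exact hcne h'
            · exact hφ0.1 h'
          · rw [LinearMap.smul_apply, hφ0.2, smul_zero]
          · rw [← hφ0K]
            exact Submodule.span_singleton_smul_eq (isUnit_iff_ne_zero.mpr hcne) φ0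
        · intro c1 h1 c2 h2 heq
          by_contra hne12
          have heq' : c1 • φ0 = c2 • φ0 := heq
          have hsub : (c1 - c2) • φ0 = 0 := by have := sub_smul c1 c2 φ0; rw [heq', sub_self] at this; exact this
          rcases smul_eq_zero.mp hsub with h' | h'
          · exact hne12 (sub_eq_zero.mp h')
          · exact hφ0.1 h'
        · intro φ hφ
          obtain ⟨c, hc, rfl⟩ := hmemfib φ hφ
          exact ⟨c, Finset.mem_erase.mpr ⟨hc, Finset.mem_univ _⟩, rfl⟩
      rw [← hbij, Finset.card_erase_of_mem (Finset.mem_univ _), Finset.card_univ, hQ]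
    obtain ⟨hval, hdvd⟩ := hNne φ0 hφ0.2 hφ0.1
    have hsum : ∑ φ ∈ W0.filter (fun φ => Submodule.span Fqm {φ} = K), ((N φ : ℤ) - 1)
        = ((q ^ m - 1 : ℕ) : ℤ) * ((N φ0 : ℤ) - 1) := by
      rw [Finset.sum_congr rfl (fun φ hφ => by rw [hNconst φ hφ]), Finset.sum_const, hcardfib,
        nsmul_eq_mul]
    rw [hsum]
    have h1 : ((q : ℤ) ^ e - 1) ∣ ((N φ0 : ℤ) - 1) := by
      rw [hval]
      push_cast
      exact aux_sub_one_dvd hdvd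
    have h2 : ((q ^ m - 1 : ℕ) : ℤ) = A - 1 := by
      have hle : 1 ≤ q ^ m := Nat.one_le_pow _ _ (by omega)
      rw [Nat.cast_sub hle, hAdef]
      push_cast
      ring
    rw [h2, hMdef, mul_comm (A - 1) ((N φ0 : ℤ) - 1)]
    exact mul_dvd_mul h1 dvd_rfl
  -- assemble the two countings
  set Sn : ℕ := ∑ φ ∈ F1, N φ with hSndef
  set Tn : ℕ := ∑ φ ∈ W0, N φ with hTndef
  have hpowN : ((q ^ ((n + 1) * m) : ℕ) : ℤ) = A ^ (n + 1) := by
    rw [Nat.cast_pow, pow_mul', hAdef]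
  have hz1 : (Sn : ℤ) = X * A ^ (n + 1) + (cN : ℤ) * A ^ n := by
    have eUn : Sn = q ^ dL * (q ^ m) ^ (n + 1) + cN * (q ^ m) ^ n := by
      rw [hswap]
      exact hUside
    rw [eUn, hXdef, hAdef]
    push_cast
    ring
  have hp2 : (Tn : ℤ) = A ^ (n + 1) - 1 + T' := by
    have h1 : T' = (Tn : ℤ) - W0.card := by
      rw [hT'def, Finset.sum_sub_distrib, Finset.sum_const, nsmul_eq_mul, mul_one, hTndef,
        Nat.cast_sum]
    have h2 : (1 : ℕ) ≤ (q ^ m) ^ (n + 1) :=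
      Nat.one_le_pow _ _ (Nat.pow_pos (by omega))
    rw [h1, hW0card, Nat.cast_sub h2]
    have h3 : (((q ^ m) ^ (n + 1) : ℕ) : ℤ) = A ^ (n + 1) := by
      rw [hAdef]; push_cast; ring
    rw [h3]
    ring
  have hz2 : (Sn : ℤ) = A ^ (n + 1) + (A ^ (n + 1) - 1 + T') := by
    have h1 : Sn = q ^ ((n + 1) * m) + Tn := hφside
    rw [h1, Nat.cast_add, hp2, hpowN]
  have hz3 : X + (cN : ℤ) = A ^ (n + 1) := by
    have h1 : ((q ^ dL + cN : ℕ) : ℤ) = ((q ^ ((n + 1) * m) : ℕ) : ℤ) := by rw [hcScN]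
    rw [hpowN] at h1
    rw [hXdef]
    push_cast at h1 ⊢
    exact h1
  have hE : X * A ^ n * (A - 1) + A ^ (2 * n + 1) - 2 * A ^ (n + 1) + 1 = T' := by
    linear_combination hz2 - hz1 - A ^ n * hz3
  have hce : ((q : ℤ) ^ e - 1) ∣ (A - 1) := by
    rw [hAdef]
    exact aux_sub_one_dvd hem
  have d1 : M ∣ X * (A - 1) * (A ^ n - 1) := by
    have h1 : ((q : ℤ) ^ e - 1) ∣ (A ^ n - 1) :=
      hce.trans (by simpa using sub_dvd_pow_sub_pow A 1 n)
    have h2 : M ∣ (A ^ n - 1) * (A - 1) := by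
      rw [hMdef]
      exact mul_dvd_mul h1 dvd_rfl
    have h3 : X * (A - 1) * (A ^ n - 1) = X * ((A ^ n - 1) * (A - 1)) := by ring
    rw [h3]
    exact h2.mul_left X
  have d2 : M ∣ A ^ (2 * n + 1) - 1 - (2 * (n : ℤ) + 1) * (A - 1) := by
    have h := aux_geom hce (2 * n + 1)
    push_cast at h
    rw [hMdef]
    exact h
  have d3 : M ∣ A ^ (n + 1) - 1 - ((n : ℤ) + 1) * (A - 1) := by
    have h := aux_geom hce (n + 1)
    push_cast at h
    rw [hMdef]
    exact h
  have hkey : M ∣ (X - 1) * (A - 1) := by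
    have hid : (X - 1) * (A - 1) = T' - X * (A - 1) * (A ^ n - 1)
        - (A ^ (2 * n + 1) - 1 - (2 * (n : ℤ) + 1) * (A - 1))
        + 2 * (A ^ (n + 1) - 1 - ((n : ℤ) + 1) * (A - 1)) := by
      linear_combination hE
    rw [hid]
    exact dvd_add (dvd_sub (dvd_sub hfib d1) d2) (d3.mul_left 2)
  have h1A : (1 : ℤ) < A := by
    rw [hAdef]
    exact one_lt_pow₀ (by exact_mod_cast hq2) (by omega)
  have hfin : ((q : ℤ) ^ e - 1) ∣ (X - 1) := by
    have hA1 : (A - 1) ≠ 0 := sub_ne_zero.mpr (ne_of_gt h1A)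
    refine (mul_dvd_mul_iff_right hA1).mp ?_
    rw [← hMdef]
    exact hkey
  have hXe : (X : ℤ) - 1 = ((q ^ dL - 1 : ℕ) : ℤ) := by
    have hle : 1 ≤ q ^ dL := Nat.one_le_pow _ _ (by omega)
    rw [Nat.cast_sub hle, hXdef]
    push_cast
    ring
  have hqe : ((q : ℤ) ^ e - 1) = ((q ^ e - 1 : ℕ) : ℤ) := by
    have hle : 1 ≤ q ^ e := Nat.one_le_pow _ _ (by omega)
    rw [Nat.cast_sub hle]
    push_cast
    ring
  have hnat : (q ^ e - 1 : ℕ) ∣ (q ^ dL - 1 : ℕ) := by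
    rw [← Int.natCast_dvd_natCast, ← hXe, ← hqe]
    exact hfin
  exact aux_e_dvd hq2 he hnat
end
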